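/- arXiv:1205.5525 — 7 statements merged into one kernel-verified Lean document; each statement's English description precedes it below -/
import Mathlib

section
/- Let n ≥ 2, let 0 ≤ λ < 1, and let (A_t)_{t≥1} be a sequence of n×n real symmetric doubly stochastic matrices such that for every t, every nonzero v ∈ ℝⁿ with ∑ᵢ vᵢ = 0 and every μ ∈ ℝ with A_t·v = μ·v, one has |μ| ≤ λ. Let p₀ ∈ ℝⁿ be a probability vector and define p_t = A_t · p_{t−1} for t ≥ 1. Then for every real c > 0 and every natural number t with t ≥ c·(ln n)/(1 − λ), one has ‖p_t − u‖ ≤ n^{−c}, where u is the uniform vector with every entry 1/n and ‖·‖ is the Euclidean norm. -/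
/-!
The error `e_t = p_t - u` lies in the hyperplane `𝟙ᗮ` of zero-sum vectors, which each `A_t`
preserves because it is symmetric and fixes `𝟙`. On that invariant subspace `A_t` is diagonalised
by an orthonormal eigenbasis whose eigenvalues are at most `λ` in absolute value, so
`‖e_t‖ ≤ λ ‖e_{t-1}‖`. Hence `‖e_t‖ ≤ λ^t ‖e_0‖ ≤ λ^t ≤ exp (-(1 - λ) t) ≤ n^(-c)`.
-/

open WithLp

namespace LinearMap.IsSymmetric

variable {𝕜 E : Type*} [RCLike 𝕜] [NormedAddCommGroup E] [InnerProductSpace 𝕜 E]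
  {T : E →ₗ[𝕜] E}

theorem norm_apply_le_of_eigenvalue_le [FiniteDimensional 𝕜 E] (hT : T.IsSymmetric) {lam : ℝ}
    (hlam0 : 0 ≤ lam) (hlam : ∀ v, v ≠ 0 → ∀ μ : 𝕜, T v = μ • v → ‖μ‖ ≤ lam) (x : E) :
    ‖T x‖ ≤ lam * ‖x‖ := by
  set b := hT.eigenvectorBasis rfl
  have hμ : ∀ i, |hT.eigenvalues rfl i| ≤ lam := fun i => by
    simpa using hlam (b i) (b.orthonormal.ne_zero i) _ (hT.apply_eigenvectorBasis rfl i)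
  refine le_of_sq_le_sq ?_ (by positivity)
  calc ‖T x‖ ^ 2 = ∑ i, ‖hT.eigenvalues rfl i * b.repr x i‖ ^ 2 := by
        rw [← b.repr.norm_map, EuclideanSpace.norm_sq_eq]
        simp_rw [b, hT.eigenvectorBasis_apply_self_apply]
    _ ≤ ∑ i, (lam * ‖b.repr x i‖) ^ 2 := by
        gcongr with i
        rw [norm_mul, RCLike.norm_ofReal]
        exact mul_le_mul_of_nonneg_right (hμ i) (norm_nonneg _)
    _ = (lam * ‖x‖) ^ 2 := by
        rw [mul_pow, ← b.repr.norm_map x, EuclideanSpace.norm_sq_eq, Finset.mul_sum]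
        simp_rw [mul_pow]

theorem norm_apply_le_of_mem_invariant [FiniteDimensional 𝕜 E] (hT : T.IsSymmetric)
    {V : Submodule 𝕜 E} (hV : ∀ v ∈ V, T v ∈ V) {lam : ℝ} (hlam0 : 0 ≤ lam)
    (hlam : ∀ v ∈ V, v ≠ 0 → ∀ μ : 𝕜, T v = μ • v → ‖μ‖ ≤ lam) {x : E} (hx : x ∈ V) :
    ‖T x‖ ≤ lam * ‖x‖ :=
  (hT.restrict_invariant hV).norm_apply_le_of_eigenvalue_le hlam0
    (fun v hv μ hμ => hlam v v.2 (by simpa using hv) μ (congrArg Subtype.val hμ)) ⟨x, hx⟩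

theorem apply_mem_orthogonal_singleton (hT : T.IsSymmetric) {u : E} {μ : 𝕜} (hu : T u = μ • u)
    {v : E} (hv : v ∈ (𝕜 ∙ u)ᗮ) : T v ∈ (𝕜 ∙ u)ᗮ := by
  rw [Submodule.mem_orthogonal_singleton_iff_inner_right] at hv ⊢
  rw [← hT, hu, inner_smul_left, hv, mul_zero]

end LinearMap.IsSymmetric

section ZeroSum

variable {ι : Type*} [Fintype ι]

theorem EuclideanSpace.mem_orthogonal_toLp_one_iff {v : EuclideanSpace ℝ ι} :
    v ∈ (ℝ ∙ toLp 2 (1 : ι → ℝ))ᗮ ↔ ∑ i, v i = 0 := by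
  simp [Submodule.mem_orthogonal_singleton_iff_inner_right, PiLp.inner_apply]

theorem sum_sq_sub_inv_card_le_one {p : ι → ℝ} (hp0 : ∀ i, 0 ≤ p i) (hp1 : ∑ i, p i = 1) :
    ∑ i, (p i - 1 / Fintype.card ι) ^ 2 ≤ 1 := by
  have hcard : (Fintype.card ι : ℝ) ≠ 0 := by
    have : Nonempty ι := by
      by_contra h
      simp [not_nonempty_iff.mp h] at hp1
    positivity
  have hle_one : ∀ i, p i ≤ 1 := fun i =>
    hp1 ▸ Finset.single_le_sum (fun j _ => hp0 j) (Finset.mem_univ i)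
  calc ∑ i, (p i - 1 / Fintype.card ι) ^ 2 = ∑ i, p i ^ 2 - 1 / Fintype.card ι := by
        simp only [sub_sq, Finset.sum_add_distrib, Finset.sum_sub_distrib, ← Finset.sum_mul,
          ← Finset.mul_sum, hp1, Finset.sum_const, Finset.card_univ, nsmul_eq_mul]
        field_simp
        ring
    _ ≤ ∑ i, p i ^ 2 := sub_le_self _ (by positivity)
    _ ≤ ∑ i, p i := Finset.sum_le_sum fun i _ => by nlinarith [hp0 i, hle_one i]
    _ = 1 := hp1

namespace Matrix

variable [DecidableEq ι] {A : Matrix ι ι ℝ}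

theorem toEuclideanLin_toLp_one (hrow : ∀ i, ∑ j, A i j = 1) :
    A.toEuclideanLin (toLp 2 1) = toLp 2 1 := by
  ext i
  simp [mulVec, dotProduct, hrow]

theorem IsSymm.isSymmetric_toEuclideanLin (hA : A.IsSymm) : A.toEuclideanLin.IsSymmetric :=
  isSymmetric_toEuclideanLin_iff.mpr (isHermitian_iff_isSymm.mpr hA)

theorem IsSymm.toEuclideanLin_mem_orthogonal_toLp_one (hA : A.IsSymm)
    (hrow : ∀ i, ∑ j, A i j = 1) {v : EuclideanSpace ℝ ι} (hv : v ∈ (ℝ ∙ toLp 2 1)ᗮ) :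
    A.toEuclideanLin v ∈ (ℝ ∙ toLp 2 1)ᗮ :=
  hA.isSymmetric_toEuclideanLin.apply_mem_orthogonal_singleton (μ := 1)
    (by rw [one_smul, toEuclideanLin_toLp_one hrow]) hv

theorem IsSymm.norm_toEuclideanLin_le (hA : A.IsSymm) (hrow : ∀ i, ∑ j, A i j = 1) {lam : ℝ}
    (hlam0 : 0 ≤ lam)
    (hbound : ∀ v : ι → ℝ, v ≠ 0 → ∑ i, v i = 0 → ∀ μ : ℝ, A *ᵥ v = μ • v → |μ| ≤ lam)
    {v : EuclideanSpace ℝ ι} (hv : v ∈ (ℝ ∙ toLp 2 1)ᗮ) :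
    ‖A.toEuclideanLin v‖ ≤ lam * ‖v‖ :=
  hA.isSymmetric_toEuclideanLin.norm_apply_le_of_mem_invariant
    (fun _ => hA.toEuclideanLin_mem_orthogonal_toLp_one hrow) hlam0
    (fun w hw hw0 μ hμ => hbound (ofLp w) (by simpa using hw0)
      (EuclideanSpace.mem_orthogonal_toLp_one_iff.mp hw) μ (congrArg ofLp hμ)) hv

end Matrix

end ZeroSum

theorem pow_le_rpow_neg_of_mul_log_div_le {lam x c : ℝ} {t : ℕ} (hlam0 : 0 ≤ lam)
    (hlam1 : lam < 1) (hx : 0 < x) (ht : c * Real.log x / (1 - lam) ≤ t) :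
    lam ^ t ≤ x ^ (-c) := by
  have hct : c * Real.log x ≤ (1 - lam) * t := by
    rw [div_le_iff₀ (by linarith)] at ht
    linarith
  calc lam ^ t ≤ Real.exp (lam - 1) ^ t := by
        gcongr
        linarith [Real.add_one_le_exp (lam - 1)]
    _ = Real.exp (-((1 - lam) * t)) := by rw [← Real.exp_nat_mul]; ring_nf
    _ ≤ Real.exp (Real.log x * -c) := by gcongr; linarith
    _ = x ^ (-c) := (Real.rpow_def_of_pos hx _).symm

theorem stmt_2_general (n : ℕ) (lam : ℝ) (hlam0 : 0 ≤ lam) (hlam1 : lam < 1)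
    (A : ℕ → Matrix (Fin n) (Fin n) ℝ)
    (hsymm : ∀ t, (A t).IsSymm)
    (hrow : ∀ t i, ∑ j, A t i j = 1)
    (hbound : ∀ t, ∀ v : Fin n → ℝ, v ≠ 0 → (∑ i, v i) = 0 →
      ∀ μ : ℝ, (A t).mulVec v = μ • v → |μ| ≤ lam)
    (p : ℕ → Fin n → ℝ)
    (hp0 : ∀ i, 0 ≤ p 0 i) (hp1 : ∑ i, p 0 i = 1)
    (hrec : ∀ t, p (t + 1) = (A (t + 1)).mulVec (p t)) :
    ∀ c : ℝ, 0 < c → ∀ t : ℕ, c * Real.log n / (1 - lam) ≤ t →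
      Real.sqrt (∑ i, (p t i - 1 / n) ^ 2) ≤ (n : ℝ) ^ (-c) := by
  intro c _ t ht
  have hn : (0 : ℝ) < n := by
    have : n ≠ 0 := by rintro rfl; simp at hp1
    positivity
  set e : ℕ → EuclideanSpace ℝ (Fin n) := fun s => toLp 2 (p s) - (1 / n : ℝ) • toLp 2 1
  have he_norm s : ‖e s‖ = Real.sqrt (∑ i, (p s i - 1 / n) ^ 2) := by
    simp [EuclideanSpace.norm_eq, e]
  have he_succ s : e (s + 1) = (A (s + 1)).toEuclideanLin (e s) := by
    simp [e, Matrix.toEuclideanLin_toLp_one (hrow _), hrec]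
  have he_mem s : e s ∈ (ℝ ∙ toLp 2 1)ᗮ := by
    induction s with
    | zero => simp [EuclideanSpace.mem_orthogonal_toLp_one_iff, e, Finset.sum_sub_distrib, hp1,
        hn.ne']
    | succ s ih => exact he_succ s ▸ (hsymm _).toEuclideanLin_mem_orthogonal_toLp_one (hrow _) ih
  have he_contract s : ‖e (s + 1)‖ ≤ lam * ‖e s‖ :=
    he_succ s ▸ (hsymm _).norm_toEuclideanLin_le (hrow _) hlam0 (hbound _) (he_mem s)
  calc Real.sqrt (∑ i, (p t i - 1 / n) ^ 2) = ‖e t‖ := (he_norm t).symm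
    _ ≤ lam ^ t * ‖e 0‖ := le_geom (u := fun s => ‖e s‖) hlam0 t fun k _ => he_contract k
    _ ≤ lam ^ t := by
      refine mul_le_of_le_one_right (pow_nonneg hlam0 t) ?_
      simpa [he_norm] using sum_sq_sub_inv_card_le_one hp0 hp1
    _ ≤ (n : ℝ) ^ (-c) := pow_le_rpow_neg_of_mul_log_div_le hlam0 hlam1 hn ht

/-- Mixing-time theorem for regular evolving graphs: if every per-round transition matrix
is symmetric doubly stochastic with second largest eigenvalue (in absolute value) at most
`λ < 1`, then for every `c > 0` and every `t ≥ c·ln n/(1−λ)` the walk's distribution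
satisfies `‖p_t − u‖ ≤ n^{−c}`. -/
theorem stmt_2 (n : ℕ) (hn : 2 ≤ n) (lam : ℝ) (hlam0 : 0 ≤ lam) (hlam1 : lam < 1)
    (A : ℕ → Matrix (Fin n) (Fin n) ℝ)
    (hsymm : ∀ t, (A t).IsSymm)
    (hnonneg : ∀ t i j, 0 ≤ A t i j)
    (hrow : ∀ t i, ∑ j, A t i j = 1)
    (hcol : ∀ t j, ∑ i, A t i j = 1)
    (hbound : ∀ t, ∀ v : Fin n → ℝ, v ≠ 0 → (∑ i, v i) = 0 →
      ∀ μ : ℝ, (A t).mulVec v = μ • v → |μ| ≤ lam)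
    (p : ℕ → Fin n → ℝ)
    (hp0 : ∀ i, 0 ≤ p 0 i) (hp1 : ∑ i, p 0 i = 1)
    (hrec : ∀ t, p (t + 1) = (A (t + 1)).mulVec (p t)) :
    ∀ c : ℝ, 0 < c → ∀ t : ℕ, c * Real.log n / (1 - lam) ≤ t →
      Real.sqrt (∑ i, (p t i - 1 / n) ^ 2) ≤ (n : ℝ) ^ (-c) :=
  stmt_2_general n lam hlam0 hlam1 A hsymm hrow hbound p hp0 hp1 hrec
end

section
/- Let G be a connected simple graph on a vertex set of size n ≥ 2 that is d-regular with d ≥ 1, and let D be its diameter (the maximum over pairs of vertices of the graph distance). Let A = (1/d)·M where M is the adjacency matrix of G. Then for every nonzero vector v ∈ ℝⁿ with ∑ᵢ vᵢ = 0 and every λ ∈ ℝ with A·v = λ·v, one has λ ≤ 1 − 1/(d·D·n). -/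
/-!
Since `L = d • 1 - M` for a `d`-regular graph, the eigenvector `v` has Dirichlet energy
`∑_{i ~ j} (v i - v j) ^ 2 = 2 d (1 - λ) ‖v‖²` (sum over ordered adjacent pairs).
As `∑ v = 0`, the maximum `v i` is `≥ 0` and the minimum `v j` is `≤ 0`, so
`‖v‖² ≤ n (v i - v j) ^ 2`. Cauchy–Schwarz along a shortest path from `j` to `i`, which has at
most `D` edges and uses each edge once, bounds `(v i - v j) ^ 2` by `D d (1 - λ) ‖v‖²`.
Hence `1 ≤ d D n (1 - λ)`.
-/

open Finset Matrix

theorem List.sq_sum_le_length_mul_sum_sq (l : List ℝ) :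
    l.sum ^ 2 ≤ l.length * (l.map (· ^ 2)).sum := by
  rw [← Fin.sum_univ_getElem, ← Fin.sum_univ_fun_getElem]
  simpa using sq_sum_le_card_mul_sum_sq (s := univ) (f := fun i : Fin l.length => l[i])

namespace SimpleGraph

variable {V : Type*} {G : SimpleGraph V}

theorem Walk.sub_eq_sum_darts (v : V → ℝ) {a b : V} (p : G.Walk a b) :
    v b - v a = (p.darts.map fun d => v d.snd - v d.fst).sum := by
  induction p with
  | nil => simp
  | cons _ _ ih => simp [← ih]

theorem Walk.sq_sub_le_length_mul_sum_darts (v : V → ℝ) {a b : V} (p : G.Walk a b) :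
    (v b - v a) ^ 2 ≤ p.length * (p.darts.map fun d => (v d.snd - v d.fst) ^ 2).sum := by
  simpa [p.sub_eq_sum_darts v, Function.comp_def] using
    List.sq_sum_le_length_mul_sum_sq (p.darts.map fun d => v d.snd - v d.fst)

theorem Walk.IsPath.two_mul_sum_darts_le [Fintype G.Dart] {a b : V} {p : G.Walk a b}
    (hp : p.IsPath) {f : G.Dart → ℝ} (hf : ∀ d, 0 ≤ f d) (hf_symm : ∀ d, f d.symm = f d) :
    2 * (p.darts.map f).sum ≤ ∑ d, f d := by
  classical
  have hedges : (p.darts.map Dart.edge).Nodup := hp.isTrail.edges_nodup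
  have hnodup : (p.darts ++ p.darts.map Dart.symm).Nodup := by
    refine List.nodup_append.mpr ⟨hedges.of_map _,
      (List.nodup_map_iff Dart.symm_involutive.injective).mpr (hedges.of_map _), ?_⟩
    rintro d hd _ hd' rfl
    obtain ⟨e, he, rfl⟩ := List.mem_map.mp hd'
    exact e.symm_ne (List.inj_on_of_nodup_map hedges hd he (Dart.edge_symm e))
  calc 2 * (p.darts.map f).sum = ((p.darts ++ p.darts.map Dart.symm).map f).sum := by
        simp [Function.comp_def, hf_symm, two_mul]
    _ = ∑ d ∈ (p.darts ++ p.darts.map Dart.symm).toFinset, f d := (List.sum_toFinset f hnodup).symm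
    _ ≤ ∑ d, f d := sum_le_sum_of_subset_of_nonneg (subset_univ _) fun d _ _ => hf d

variable [Fintype V] [DecidableRel G.Adj]

theorem sum_darts_eq_sum_adj (g : V → V → ℝ) :
    ∑ d : G.Dart, g d.fst d.snd = ∑ i, ∑ j, if G.Adj i j then g i j else 0 := by
  rw [← Fintype.sum_prod_type', ← sum_filter]
  exact sum_bij' (fun d _ => d.toProd) (fun p hp => ⟨p, (mem_filter.mp hp).2⟩)
    (fun d _ => mem_filter.mpr ⟨mem_univ _, d.adj⟩) (fun _ _ => mem_univ _)
    (fun _ _ => rfl) (fun _ _ => rfl) (fun _ _ => rfl)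

theorem IsRegularOfDegree.sum_adj_sq_sub_eq {d : ℕ} (hreg : G.IsRegularOfDegree d)
    {v : V → ℝ} {μ : ℝ} (hv : G.adjMatrix ℝ *ᵥ v = μ • v) :
    (∑ i, ∑ j, if G.Adj i j then (v i - v j) ^ 2 else 0) = 2 * (d - μ) * ∑ i, v i ^ 2 := by
  classical
  have hlap : G.lapMatrix ℝ *ᵥ v = (d - μ) • v := by
    ext i
    rw [lapMatrix_mulVec_apply, ← adjMatrix_mulVec_apply, hv, hreg i]
    simp only [Pi.smul_apply, smul_eq_mul]
    ring
  have hform := G.lapMatrix_toLinearMap₂' ℝ v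
  rw [toLinearMap₂'_apply', hlap, dotProduct_smul, smul_eq_mul] at hform
  simp only [dotProduct, ← sq] at hform
  linarith

theorem Connected.sq_sub_le_diam_mul_sum_adj (hconn : G.Connected) (v : V → ℝ) (a b : V) :
    (v b - v a) ^ 2 ≤ G.diam * ((∑ i, ∑ j, if G.Adj i j then (v i - v j) ^ 2 else 0) / 2) := by
  obtain ⟨p, hp⟩ := hconn.exists_walk_length_eq_dist a b
  have : Nonempty V := ⟨a⟩
  have hlen : p.length ≤ G.diam := hp ▸ dist_le_diam (connected_iff_ediam_ne_top.mp hconn)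
  set F : G.Dart → ℝ := fun d => (v d.snd - v d.fst) ^ 2
  have hF : 0 ≤ (p.darts.map F).sum := List.sum_nonneg (by simp [F, sq_nonneg])
  have hpath : 2 * (p.darts.map F).sum ≤ ∑ d, F d :=
    (p.isPath_of_length_eq_dist hp).two_mul_sum_darts_le (fun _ => sq_nonneg _)
      fun d => by simp only [F, Dart.symm_toProd, Prod.fst_swap, Prod.snd_swap, sub_sq_comm]
  have hall : ∑ d, F d = ∑ i, ∑ j, if G.Adj i j then (v i - v j) ^ 2 else 0 := by
    rw [← sum_darts_eq_sum_adj fun i j => (v i - v j) ^ 2]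
    exact sum_congr rfl fun d _ => sub_sq_comm _ _
  calc (v b - v a) ^ 2 ≤ p.length * (p.darts.map F).sum := p.sq_sub_le_length_mul_sum_darts v
    _ ≤ G.diam * ((∑ i, ∑ j, if G.Adj i j then (v i - v j) ^ 2 else 0) / 2) :=
      mul_le_mul (by exact_mod_cast hlen) (by linarith) hF (Nat.cast_nonneg _)

end SimpleGraph

theorem sum_sq_le_card_mul_sq_sub_of_sum_eq_zero {ι : Type*} [Fintype ι] {v : ι → ℝ}
    (hsum : ∑ k, v k = 0) {i j : ι} (hi : ∀ k, v k ≤ v i) (hj : ∀ k, v j ≤ v k) :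
    ∑ k, v k ^ 2 ≤ Fintype.card ι * (v i - v j) ^ 2 := by
  have hi0 : 0 ≤ v i := by
    by_contra! h
    exact (sum_neg (fun k _ => (hi k).trans_lt h) ⟨i, mem_univ _⟩).ne hsum
  have hj0 : v j ≤ 0 := by
    by_contra! h
    exact (sum_pos (fun k _ => h.trans_le (hj k)) ⟨j, mem_univ _⟩).ne' hsum
  calc ∑ k, v k ^ 2 ≤ ∑ _k : ι, (v i - v j) ^ 2 :=
        sum_le_sum fun k _ => sq_le_sq' (by linarith [hj k]) (by linarith [hi k])
    _ = Fintype.card ι * (v i - v j) ^ 2 := by simp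

theorem stmt_4_general (n : ℕ) (d : ℕ) (hd : 1 ≤ d)
    (G : SimpleGraph (Fin n)) [DecidableRel G.Adj]
    (hconn : G.Connected) (hreg : G.IsRegularOfDegree d)
    (A : Matrix (Fin n) (Fin n) ℝ)
    (hA : A = (1 / (d : ℝ)) • G.adjMatrix ℝ) :
    ∀ v : Fin n → ℝ, v ≠ 0 → (∑ i, v i) = 0 →
      ∀ lam : ℝ, A.mulVec v = lam • v →
        lam ≤ 1 - 1 / ((d : ℝ) * (G.diam : ℝ) * (n : ℝ)) := by
  intro v hv hsum lam heig
  have hM : G.adjMatrix ℝ *ᵥ v = ((d : ℝ) * lam) • v := by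
    have hd0 : (d : ℝ) ≠ 0 := by positivity
    rw [← smul_smul, ← heig, hA, smul_mulVec, smul_smul, mul_one_div_cancel hd0, one_smul]
  obtain ⟨k, hk : v k ≠ 0⟩ := Function.ne_iff.mp hv
  have hnorm : 0 < ∑ k, v k ^ 2 :=
    Fintype.sum_pos (Pi.lt_def.mpr ⟨fun _ => sq_nonneg _, k, by positivity⟩)
  have : Nonempty (Fin n) := ⟨k⟩
  obtain ⟨i, hi⟩ := Finite.exists_max v
  obtain ⟨j, hj⟩ := Finite.exists_min v
  have hspread := sum_sq_le_card_mul_sq_sub_of_sum_eq_zero hsum hi hj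
  have hpath := hconn.sq_sub_le_diam_mul_sum_adj v j i
  rw [hreg.sum_adj_sq_sub_eq hM] at hpath
  have hgap : 1 ≤ (d * G.diam * n : ℝ) * (1 - lam) := by
    refine le_of_mul_le_mul_left ?_ hnorm
    calc (∑ k, v k ^ 2) * 1 ≤ n * (v i - v j) ^ 2 := by simpa using hspread
      _ ≤ n * (G.diam * ((2 * (d - d * lam) * ∑ k, v k ^ 2) / 2)) := by gcongr
      _ = (∑ k, v k ^ 2) * ((d * G.diam * n : ℝ) * (1 - lam)) := by ring
  have hlam : 0 < 1 - lam := pos_of_mul_pos_right (one_pos.trans_le hgap) (by positivity)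
  have hX : 0 < (d * G.diam * n : ℝ) := pos_of_mul_pos_left (one_pos.trans_le hgap) hlam.le
  have hinv : 1 / (d * G.diam * n : ℝ) ≤ 1 - lam := (div_le_iff₀ hX).mpr (by linarith)
  linarith

/-- For a connected `d`-regular simple graph `G` on `n ≥ 2` vertices with diameter `D`,
every eigenvalue of the random-walk transition matrix `A = (1/d)·M` (with `M` the
adjacency matrix) whose eigenvector has coordinates summing to zero is at most
`1 − 1/(d·D·n)`. -/
theorem stmt_4 (n : ℕ) (hn : 2 ≤ n) (d : ℕ) (hd : 1 ≤ d)
    (G : SimpleGraph (Fin n)) [DecidableRel G.Adj]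
    (hconn : G.Connected) (hreg : G.IsRegularOfDegree d)
    (A : Matrix (Fin n) (Fin n) ℝ)
    (hA : A = (1 / (d : ℝ)) • G.adjMatrix ℝ) :
    ∀ v : Fin n → ℝ, v ≠ 0 → (∑ i, v i) = 0 →
      ∀ lam : ℝ, A.mulVec v = lam • v →
        lam ≤ 1 - 1 / ((d : ℝ) * (G.diam : ℝ) * (n : ℝ)) :=
  stmt_4_general n d hd G hconn hreg A hA
end

section
/- Let G be a connected simple graph on a vertex set of size n ≥ 2 that is d-regular with d ≥ 1, and let A = (1/d)·M where M is the adjacency matrix of G. Then for every nonzero vector v ∈ ℝⁿ with ∑ᵢ vᵢ = 0 and every λ ∈ ℝ with A·v = λ·v, one has λ ≤ 1 − 1/n³. -/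
open Finset

private lemma list_sq_sum (l : List ℝ) :
    l.sum ^ 2 ≤ (l.length : ℝ) * (l.map (fun x => x ^ 2)).sum := by
  have h1 : l.sum = ∑ i : Fin l.length, l.get i := by
    conv_lhs => rw [← List.ofFn_get l]
    rw [List.sum_ofFn]
  have h2 : (l.map (fun x => x ^ 2)).sum = ∑ i : Fin l.length, (l.get i) ^ 2 := by
    conv_lhs => rw [← List.ofFn_get l, List.map_ofFn]
    rw [List.sum_ofFn]; rfl
  rw [h1, h2]
  have h3 := sq_sum_le_card_mul_sum_sq (s := (univ : Finset (Fin l.length)))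
    (f := fun i => l.get i)
  simpa using h3

private lemma walk_tele {n : ℕ} {G : SimpleGraph (Fin n)} (v : Fin n → ℝ) :
    ∀ {i j : Fin n} (p : G.Walk i j),
      (p.darts.map (fun dd => v dd.snd - v dd.fst)).sum = v j - v i := by
  intro i j p
  induction p with
  | nil => simp
  | cons h q ih =>
    rw [SimpleGraph.Walk.darts_cons, List.map_cons, List.sum_cons, ih]
    ring

private lemma dart_sum {n : ℕ} (G : SimpleGraph (Fin n)) [DecidableRel G.Adj]
    (f : Fin n → Fin n → ℝ) :
    ∑ d : G.Dart, f d.fst d.snd = ∑ u, ∑ w ∈ G.neighborFinset u, f u w := by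
  let e : (Σ u : Fin n, G.neighborSet u) ≃ G.Dart :=
    { toFun := fun s => ⟨(s.fst, s.snd), s.snd.property⟩
      invFun := fun d => ⟨d.fst, d.snd, d.adj⟩
      left_inv := fun s => by ext <;> simp
      right_inv := fun d => by ext <;> simp }
  rw [← Equiv.sum_comp e (fun d => f d.fst d.snd)]
  rw [← Finset.univ_sigma_univ, Finset.sum_sigma]
  refine Finset.sum_congr rfl fun u _ => ?_
  rw [SimpleGraph.neighborFinset_def, ← Finset.sum_set_coe]
  rfl

/-- For a connected `d`-regular simple graph on `n ≥ 2` vertices, every eigenvalue of the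
random-walk transition matrix `A = (1/d)·M` whose eigenvector has coordinates summing to
zero is at most `1 − 1/n³`. -/
theorem stmt_5 (n : ℕ) (hn : 2 ≤ n) (d : ℕ) (hd : 1 ≤ d)
    (G : SimpleGraph (Fin n)) [DecidableRel G.Adj]
    (hconn : G.Connected) (hreg : G.IsRegularOfDegree d)
    (A : Matrix (Fin n) (Fin n) ℝ)
    (hA : A = (1 / (d : ℝ)) • G.adjMatrix ℝ) :
    ∀ v : Fin n → ℝ, v ≠ 0 → (∑ i, v i) = 0 →
      ∀ lam : ℝ, A.mulVec v = lam • v →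
        lam ≤ 1 - 1 / (n : ℝ) ^ 3 := by
  subst hA
  intro v hv hsum lam hAv
  have hd0 : (0:ℝ) < (d:ℝ) := by exact_mod_cast hd
  have hn0 : (0:ℝ) < (n:ℝ) := by
    have : 0 < n := by omega
    exact_mod_cast this
  -- eigen equation for the adjacency matrix
  have hM : (G.adjMatrix ℝ).mulVec v = ((d:ℝ) * lam) • v := by
    rw [Matrix.smul_mulVec] at hAv
    calc (G.adjMatrix ℝ).mulVec v
        = (d:ℝ) • ((1/(d:ℝ)) • (G.adjMatrix ℝ).mulVec v) := by
          rw [smul_smul, mul_one_div, div_self hd0.ne', one_smul]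
      _ = (d:ℝ) • (lam • v) := by rw [hAv]
      _ = ((d:ℝ) * lam) • v := by rw [smul_smul]
  have hnb : ∀ u, ∑ w ∈ G.neighborFinset u, v w = (d:ℝ) * lam * v u := by
    intro u
    have h := congrFun hM u
    simpa using h
  set W := ∑ k, v k ^ 2 with hW
  have hWpos : 0 < W := by
    obtain ⟨k, hk⟩ := Function.ne_iff.mp hv
    have h1 : v k ^ 2 ≤ W := Finset.single_le_sum (fun i _ => sq_nonneg (v i)) (mem_univ k)
    have h2 : 0 < v k ^ 2 := lt_of_le_of_ne (sq_nonneg _) (Ne.symm (pow_ne_zero 2 hk))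
    linarith
  -- the three dart sums
  have hcard : ∀ u : Fin n, (G.neighborFinset u).card = d := fun u => hreg u
  have hS1 : ∑ dd : G.Dart, v dd.fst ^ 2 = (d:ℝ) * W := by
    calc ∑ dd : G.Dart, v dd.fst ^ 2
        = ∑ u, ∑ w ∈ G.neighborFinset u, v u ^ 2 := dart_sum G (fun u _ => v u ^ 2)
      _ = ∑ u, (d:ℝ) * v u ^ 2 := by
          refine Finset.sum_congr rfl fun u _ => ?_
          rw [Finset.sum_const, hcard u, nsmul_eq_mul]
      _ = (d:ℝ) * W := by rw [hW, Finset.mul_sum]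
  have hS2 : ∑ dd : G.Dart, v dd.snd ^ 2 = (d:ℝ) * W := by
    rw [← hS1]
    exact Fintype.sum_equiv SimpleGraph.Dart.symm_involutive.toPerm
      _ _ (fun dd => rfl)
  have hS3 : ∑ dd : G.Dart, v dd.fst * v dd.snd = (d:ℝ) * lam * W := by
    calc ∑ dd : G.Dart, v dd.fst * v dd.snd
        = ∑ u, ∑ w ∈ G.neighborFinset u, v u * v w := dart_sum G (fun u w => v u * v w)
      _ = ∑ u, (d:ℝ) * lam * (v u * v u) := by
          refine Finset.sum_congr rfl fun u _ => ?_
          rw [← Finset.mul_sum, hnb u]; ring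
      _ = (d:ℝ) * lam * W := by
          rw [hW, Finset.mul_sum]
          exact Finset.sum_congr rfl fun u _ => by ring
  set S := ∑ dd : G.Dart, (v dd.snd - v dd.fst) ^ 2 with hSdef
  have hS : S = 2*(d:ℝ)*(1-lam)*W := by
    have h : S = ∑ dd : G.Dart, (v dd.fst^2 + v dd.snd^2 - 2*(v dd.fst * v dd.snd)) :=
      Finset.sum_congr rfl (fun _ _ => by ring)
    rw [h, Finset.sum_sub_distrib, Finset.sum_add_distrib, ← Finset.mul_sum, hS1, hS2, hS3]
    ring
  -- extremal coordinates
  have hne : Nonempty (Fin n) := ⟨⟨0, by omega⟩⟩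
  obtain ⟨i, -, hi⟩ := Finset.exists_max_image (univ : Finset (Fin n)) v univ_nonempty
  obtain ⟨j, -, hj⟩ := Finset.exists_min_image (univ : Finset (Fin n)) v univ_nonempty
  have hij : v j < v i := by
    by_contra hle
    push_neg at hle
    have hconst : ∀ k, v k = v i := fun k =>
      le_antisymm (hi k (mem_univ k)) (le_trans hle (hj k (mem_univ k)))
    have hzero : (n:ℝ) * v i = 0 := by
      rw [← hsum]
      rw [Finset.sum_congr rfl (fun k _ => hconst k)]
      simp [mul_comm]
    have : v i = 0 := by
      rcases mul_eq_zero.mp hzero with h | h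
      · exact absurd h hn0.ne'
      · exact h
    exact hv (funext fun k => by rw [hconst k, this]; rfl)
  have hvi0 : 0 ≤ v i := by
    by_contra hlt
    push_neg at hlt
    have : ∑ k, v k ≤ ∑ k : Fin n, v i := Finset.sum_le_sum fun k _ => hi k (mem_univ k)
    rw [hsum] at this
    simp only [Finset.sum_const, card_univ, Fintype.card_fin, nsmul_eq_mul] at this
    nlinarith
  have hvj0 : v j ≤ 0 := by
    by_contra hlt
    push_neg at hlt
    have : ∑ k : Fin n, v j ≤ ∑ k, v k := Finset.sum_le_sum fun k _ => hj k (mem_univ k)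
    rw [hsum] at this
    simp only [Finset.sum_const, card_univ, Fintype.card_fin, nsmul_eq_mul] at this
    nlinarith
  set c := (v i - v j)^2 with hc
  have hcpos : 0 < c := by
    have : v i - v j ≠ 0 := by intro h; linarith [sub_eq_zero.mp h]
    exact lt_of_le_of_ne (sq_nonneg _) (Ne.symm (pow_ne_zero 2 this))
  have hWle : W ≤ (n:ℝ) * c := by
    calc W ≤ ∑ _k : Fin n, c := by
          refine Finset.sum_le_sum fun k _ => ?_
          exact sq_le_sq' (by have := hj k (mem_univ k); linarith)
            (by have := hi k (mem_univ k); linarith)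
      _ = (n:ℝ) * c := by
          simp [Finset.sum_const, card_univ, nsmul_eq_mul]
  -- path from i to j
  obtain ⟨p0⟩ := hconn.preconnected i j
  set p : G.Walk i j := (p0.toPath : G.Walk i j) with hpdef
  have hpath : p.IsPath := p0.toPath.2
  have hlen : p.length < n := by
    have := hpath.length_lt
    simpa using this
  set P := (p.darts.map (fun dd => (v dd.snd - v dd.fst)^2)).sum with hPdef
  -- Cauchy–Schwarz along the path
  have hCS : c ≤ (p.length : ℝ) * P := by
    have h := list_sq_sum (p.darts.map (fun dd => v dd.snd - v dd.fst))
    rw [walk_tele v p] at h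
    rw [List.map_map, List.length_map, SimpleGraph.Walk.length_darts] at h
    have hc2 : (v j - v i)^2 = c := by rw [hc]; ring
    rw [hc2] at h
    exact h
  -- the path sum is at most half of S
  have hPS : 2 * P ≤ S := by
    have hnodupE : (p.darts.map SimpleGraph.Dart.edge).Nodup := hpath.isTrail.edges_nodup
    have hnodup : p.darts.Nodup := hnodupE.of_map _
    have hsymminj : Function.Injective (SimpleGraph.Dart.symm : G.Dart → G.Dart) :=
      SimpleGraph.Dart.symm_involutive.injective
    have hnodup2 : (p.darts.map SimpleGraph.Dart.symm).Nodup := hnodup.map hsymminj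
    set T : G.Dart → ℝ := fun dd => (v dd.snd - v dd.fst)^2 with hT
    have hdisj : Disjoint p.darts.toFinset (p.darts.map SimpleGraph.Dart.symm).toFinset := by
      rw [Finset.disjoint_left]
      intro a ha hb
      rw [List.mem_toFinset] at ha hb
      obtain ⟨b, hbmem, hba⟩ := List.mem_map.mp hb
      have hedge : SimpleGraph.Dart.edge b = SimpleGraph.Dart.edge a := by
        rw [← hba, SimpleGraph.Dart.edge_symm]
      have : b = a := List.inj_on_of_nodup_map hnodupE hbmem ha hedge
      rw [this] at hba
      exact SimpleGraph.Dart.symm_ne a hba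
    have hsub : p.darts.toFinset ∪ (p.darts.map SimpleGraph.Dart.symm).toFinset ⊆ univ :=
      Finset.subset_univ _
    have hle : ∑ x ∈ p.darts.toFinset ∪ (p.darts.map SimpleGraph.Dart.symm).toFinset, T x ≤ S := by
      rw [hSdef]
      exact Finset.sum_le_sum_of_subset_of_nonneg hsub (fun x _ _ => sq_nonneg _)
    rw [Finset.sum_union hdisj] at hle
    have e1 : ∑ x ∈ p.darts.toFinset, T x = P := by
      rw [List.sum_toFinset T hnodup, hPdef]
    have e2 : ∑ x ∈ (p.darts.map SimpleGraph.Dart.symm).toFinset, T x = P := by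
      rw [List.sum_toFinset T hnodup2, List.map_map, hPdef]
      refine congrArg List.sum (List.map_congr_left fun dd _ => ?_)
      show (v dd.fst - v dd.snd)^2 = (v dd.snd - v dd.fst)^2
      ring
    rw [e1, e2] at hle
    linarith
  -- combine everything
  have hP2 : P ≤ (d:ℝ) * ((1-lam) * W) := by rw [hS] at hPS; nlinarith
  have hLnn : (0:ℝ) ≤ (p.length : ℝ) := Nat.cast_nonneg _
  have key : c ≤ (p.length : ℝ) * ((d:ℝ) * ((1-lam) * W)) :=
    le_trans hCS (mul_le_mul_of_nonneg_left hP2 hLnn)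
  have hlam : 0 ≤ 1 - lam := by
    by_contra hneg
    push_neg at hneg
    have h1 : (1 - lam) * W ≤ 0 := mul_nonpos_iff.mpr (Or.inr ⟨hneg.le, hWpos.le⟩)
    have h2 : (d:ℝ) * ((1 - lam) * W) ≤ 0 := mul_nonpos_iff.mpr (Or.inl ⟨hd0.le, h1⟩)
    have h3 : (p.length:ℝ) * ((d:ℝ) * ((1 - lam) * W)) ≤ 0 :=
      mul_nonpos_iff.mpr (Or.inl ⟨hLnn, h2⟩)
    linarith
  have hLn : (p.length : ℝ) ≤ (n:ℝ) := by
    have : p.length ≤ n := le_of_lt hlen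
    exact_mod_cast this
  have hdn : (d:ℝ) ≤ (n:ℝ) := by
    have h1 : G.degree i < n := by
      have := G.degree_lt_card_verts i
      simpa using this
    have : d ≤ n := by rw [← hreg i]; omega
    exact_mod_cast this
  have final1 : c ≤ (n:ℝ)^3 * ((1-lam) * c) := by
    calc c ≤ (p.length : ℝ) * ((d:ℝ) * ((1-lam) * W)) := key
      _ ≤ (n:ℝ) * ((n:ℝ) * ((1-lam) * ((n:ℝ) * c))) := by
          gcongr
      _ = (n:ℝ)^3 * ((1-lam) * c) := by ring
  have hgap : 1 ≤ (n:ℝ)^3 * (1-lam) := by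
    have h := final1
    have hcc : (1:ℝ) * c ≤ ((n:ℝ)^3 * (1-lam)) * c := by
      rw [one_mul]; rw [mul_assoc]; exact h
    exact le_of_mul_le_mul_right hcc hcpos
  have hn3 : (0:ℝ) < (n:ℝ)^3 := by positivity
  have hfin : 1 / (n:ℝ)^3 ≤ 1 - lam := by
    rw [div_le_iff₀ hn3]
    linarith [hgap, mul_comm ((n:ℝ)^3) (1 - lam)]
  linarith
end

section
/- Let G be a connected simple graph on a finite nonempty vertex set V and let f : V → ℝ satisfy ∑_{x∈V} f(x) = 0. Then max_{x∈V} |f(x)| ≤ (1/2)·∑_{(x,y) : x adjacent to y} |f(x) − f(y)|, where the sum ranges over ordered pairs of adjacent vertices (so each edge is counted twice, in each order). -/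
open Finset

private lemma walkbd {V : Type*} (G : SimpleGraph V) (g : Sym2 V → ℝ) (f : V → ℝ)
    (hge : ∀ a b, G.Adj a b → |f a - f b| ≤ g (s(a, b))) :
    ∀ {x y : V} (p : G.Walk x y), |f x - f y| ≤ (p.edges.map g).sum := by
  intro x y p
  induction p with
  | nil => simp
  | @cons u v w h p ih =>
    simp only [SimpleGraph.Walk.edges_cons, List.map_cons, List.sum_cons]
    calc |f u - f w| ≤ |f u - f v| + |f v - f w| := abs_sub_le _ _ _
      _ ≤ _ := add_le_add (hge _ _ h) ih

/-- For a connected simple graph `G` and a function `f` on its vertices summing to zero,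
the supremum norm of `f` is at most half the sum of `|f(x) − f(y)|` over ordered pairs of
adjacent vertices. -/
theorem stmt_9 {V : Type*} [Fintype V] [Nonempty V] (G : SimpleGraph V)
    [DecidableRel G.Adj] (hconn : G.Connected)
    (f : V → ℝ) (h0 : ∑ x, f x = 0) :
    (⨆ x, |f x|) ≤ (1 / 2) * ∑ x, ∑ y, if G.Adj x y then |f x - f y| else 0 := by
  classical
  set g : Sym2 V → ℝ := Sym2.lift ⟨fun a b => |f a - f b|, fun a b => abs_sub_comm _ _⟩ with hg
  have hgnn : ∀ e : Sym2 V, 0 ≤ g e := by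
    intro e; induction e with
    | _ a b => simp [hg]
  -- the double sum equals twice the edge sum
  have hds : ∑ x, ∑ y, (if G.Adj x y then |f x - f y| else 0) = 2 * ∑ e ∈ G.edgeFinset, g e := by
    have h1 : ∑ x, ∑ y, (if G.Adj x y then |f x - f y| else 0)
        = ∑ p ∈ univ.filter (fun p : V × V => G.Adj p.1 p.2), |f p.1 - f p.2| := by
      rw [Finset.sum_filter, ← Finset.sum_product', Finset.univ_product_univ]
    have h2 : ∑ p ∈ univ.filter (fun p : V × V => G.Adj p.1 p.2), |f p.1 - f p.2|
        = ∑ d : G.Dart, g d.edge := by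
      refine (Finset.sum_bij (fun (d : G.Dart) _ => d.toProd) ?_ ?_ ?_ ?_).symm
      · intro d _; simp [d.adj]
      · intro d1 _ d2 _ h; exact SimpleGraph.Dart.ext _ _ h
      · intro p hp
        simp only [mem_filter, mem_univ, true_and] at hp
        exact ⟨⟨p, hp⟩, mem_univ _, rfl⟩
      · rintro ⟨⟨a, b⟩, hab⟩ _
        simp [hg, SimpleGraph.Dart.edge]
    have h3 : ∑ d : G.Dart, g d.edge = ∑ e ∈ G.edgeFinset, 2 * g e := by
      rw [← Finset.sum_fiberwise_of_maps_to (g := fun d : G.Dart => SimpleGraph.Dart.edge d)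
        (fun d _ => SimpleGraph.mem_edgeFinset.mpr d.edge_mem)]
      refine Finset.sum_congr rfl fun e he => ?_
      rw [Finset.sum_congr rfl (fun d hd => ?_), Finset.sum_const, nsmul_eq_mul]
      · congr 1
        exact_mod_cast G.dart_edge_fiber_card e (SimpleGraph.mem_edgeFinset.mp he)
      · simp only [mem_filter] at hd
        rw [hd.2]
    rw [h1, h2, h3, Finset.mul_sum]
  rw [hds, one_div, inv_mul_cancel_left₀ (by norm_num : (2:ℝ) ≠ 0)]
  refine ciSup_le fun x => ?_
  -- find y with |f x| ≤ |f x - f y|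
  have hkey : ∃ y : V, |f x| ≤ |f x - f y| := by
    rcases le_or_gt 0 (f x) with hx | hx
    · by_contra hc
      push_neg at hc
      have hall : ∀ y : V, 0 < f y := by
        intro y
        by_contra hy
        push_neg at hy
        exact absurd (le_abs_self _ |>.trans' (by rw [abs_of_nonneg hx]; linarith)) (not_le.mpr (hc y))
      have := Finset.sum_pos (fun y _ => hall y) univ_nonempty
      linarith [h0]
    · by_contra hc
      push_neg at hc
      have hall : ∀ y : V, f y < 0 := by
        intro y
        by_contra hy
        push_neg at hy
        have : |f x| ≤ |f x - f y| := by
          rw [abs_of_neg hx, abs_sub_comm]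
          exact le_abs_self _ |>.trans' (by linarith)
        exact absurd this (not_le.mpr (hc y))
      have := Finset.sum_neg (fun y _ => hall y) univ_nonempty
      linarith [h0]
  obtain ⟨y, hy⟩ := hkey
  obtain ⟨w⟩ := hconn.preconnected x y
  have hpath := w.toPath
  calc |f x| ≤ |f x - f y| := hy
    _ ≤ ((w.toPath : G.Walk x y).edges.map g).sum :=
        walkbd G g f (fun a b _ => by simp [hg]) _
    _ = ∑ e ∈ (w.toPath : G.Walk x y).edges.toFinset, g e :=
        (List.sum_toFinset _ w.toPath.2.edges_nodup).symm
    _ ≤ ∑ e ∈ G.edgeFinset, g e := by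
        refine Finset.sum_le_sum_of_subset_of_nonneg (fun e he => ?_) (fun e _ _ => hgnn e)
        rw [List.mem_toFinset] at he
        exact SimpleGraph.mem_edgeFinset.mpr ((w.toPath : G.Walk x y).edges_subset_edgeSet he)
end

section
/- Let n ≥ 1, let α > 0 and c > 0, and let Q be an n×n real symmetric stochastic matrix satisfying: (i) Q(x,x) ≥ α for every x; (ii) the graph on the index set with an edge between x ≠ y whenever Q(x,y) > 0 is connected; (iii) c ≤ Q(x,y)/n for every x ≠ y with Q(x,y) > 0. Then for every f ∈ ℝⁿ with ∑ₓ f(x) = 0 and (1/n)·∑ₓ f(x)² ≤ 1, one has 2(αc)²·max{ 2‖f‖_∞², ‖f‖_∞⁴ } ≤ (1/n)·∑ₓ f(x)·((I − Q²)·f)(x), where ‖f‖_∞ = maxₓ |f(x)| and I is the identity matrix. -/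
open Finset

/-- Vertices of a path (walk with nodup support) are pairwise distinct as a function of index. -/
lemma walk_getVert_inj' {V : Type*} {G : SimpleGraph V} {u v : V} (w : G.Walk u v)
    (hw : w.IsPath) : ∀ i ≤ w.length, ∀ j ≤ w.length, w.getVert i = w.getVert j → i = j := by
  induction w with
  | nil =>
    intro i hi j hj _
    simp only [SimpleGraph.Walk.length_nil, Nat.le_zero] at hi hj
    omega
  | @cons a b c h p ih =>
    have hp : p.IsPath := hw.of_cons
    have ha : a ∉ p.support := ((SimpleGraph.Walk.cons_isPath_iff h p).mp hw).2
    intro i hi j hj hij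
    rw [SimpleGraph.Walk.length_cons] at hi hj
    match i, j with
    | 0, 0 => rfl
    | 0, (j+1) =>
      exfalso
      apply ha
      rw [SimpleGraph.Walk.mem_support_iff_exists_getVert]
      exact ⟨j, by simpa using hij.symm, by omega⟩
    | (i+1), 0 =>
      exfalso
      apply ha
      rw [SimpleGraph.Walk.mem_support_iff_exists_getVert]
      exact ⟨i, by simpa using hij, by omega⟩
    | (i+1), (j+1) =>
      have := ih hp i (by omega) j (by omega) (by simpa using hij)
      omega

/-- Telescoping Cauchy–Schwarz, plain version. -/
lemma tele_cs1 (L : ℕ) (u : ℕ → ℝ) :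
    (u 0 - u L)^2 ≤ (∑ i ∈ Finset.range L, (u i - u (i+1))^2) * (L : ℝ) := by
  have h : ∑ i ∈ Finset.range L, (u i - u (i+1)) = u 0 - u L := Finset.sum_range_sub' u L
  have hcs := Finset.sum_mul_sq_le_sq_mul_sq (Finset.range L)
    (fun i => u i - u (i+1)) (fun _ => (1:ℝ))
  simp only [mul_one, one_pow, Finset.sum_const, Finset.card_range, nsmul_eq_mul] at hcs
  rw [h] at hcs
  exact hcs

/-- Telescoping Cauchy–Schwarz, squared version. -/
lemma tele_cs2 (L : ℕ) (u : ℕ → ℝ) :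
    ((u 0)^2 - (u L)^2)^2 ≤
      (∑ i ∈ Finset.range L, (u i + u (i+1))^2) *
        (∑ i ∈ Finset.range L, (u i - u (i+1))^2) := by
  have h : ∑ i ∈ Finset.range L, ((u i)^2 - (u (i+1))^2) = (u 0)^2 - (u L)^2 :=
    Finset.sum_range_sub' (fun i => (u i)^2) L
  have hcs' : (∑ i ∈ Finset.range L, (u i + u (i+1)) * (u i - u (i+1)))^2 ≤
      (∑ i ∈ Finset.range L, (u i + u (i+1))^2) *
        (∑ i ∈ Finset.range L, (u i - u (i+1))^2) :=
    Finset.sum_mul_sq_le_sq_mul_sq (Finset.range L)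
      (fun i => u i + u (i+1)) (fun i => u i - u (i+1))
  have hfac : ∑ i ∈ Finset.range L, (u i + u (i+1)) * (u i - u (i+1))
      = ∑ i ∈ Finset.range L, ((u i)^2 - (u (i+1))^2) :=
    Finset.sum_congr rfl fun i _ => by ring
  rw [hfac, h] at hcs'
  exact hcs'

set_option maxHeartbeats 1000000 in
/-- The key Dirichlet-form estimate from the paper's adaptation of Lyons's lemma: for a
lazy, symmetric, stochastic, connected transition matrix `Q` with self-loop probability
at least `α` and minimal off-diagonal entry `π(x)Q(x,y) ≥ c`, every mean-zero `f` with
`⟨f, f⟩_π ≤ 1` satisfies `2(αc)²·max{2‖f‖_∞², ‖f‖_∞⁴} ≤ ⟨(I − Q²)f, f⟩_π`. -/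
theorem stmt_10 (n : ℕ) (hn : 1 ≤ n) (α c : ℝ) (hα : 0 < α) (hc : 0 < c)
    (Q : Matrix (Fin n) (Fin n) ℝ) (hsymm : Q.IsSymm)
    (hnn : ∀ x y, 0 ≤ Q x y) (hrow : ∀ x, ∑ y, Q x y = 1)
    (hdiag : ∀ x, α ≤ Q x x)
    (hconn : (SimpleGraph.fromRel fun x y => 0 < Q x y).Connected)
    (hmin : ∀ x y, x ≠ y → 0 < Q x y → c ≤ Q x y / n)
    (f : Fin n → ℝ) (h0 : ∑ x, f x = 0)
    (h1 : (1 / (n : ℝ)) * ∑ x, (f x) ^ 2 ≤ 1) :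
    2 * (α * c) ^ 2 * max (2 * (⨆ x, |f x|) ^ 2) ((⨆ x, |f x|) ^ 4)
      ≤ (1 / (n : ℝ)) * ∑ x, f x * ((1 - Q ^ 2).mulVec f x) := by
  classical
  have hNpos : (0:ℝ) < n := by exact_mod_cast hn
  have hne : Nonempty (Fin n) := ⟨⟨0, hn⟩⟩
  set G := SimpleGraph.fromRel fun x y => 0 < Q x y with hGdef
  -- the maximizer of |f|
  obtain ⟨x₀, hx₀⟩ := Finite.exists_max fun x => |f x|
  have hbdd : BddAbove (Set.range fun x => |f x|) := (Set.finite_range _).bddAbove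
  have hM : (⨆ x, |f x|) = |f x₀| := le_antisymm (ciSup_le hx₀) (le_ciSup hbdd x₀)
  rw [hM]
  set M : ℝ := |f x₀| with hMdef
  by_cases hM0 : M = 0
  · -- trivial case : f = 0
    have hf0 : ∀ x, f x = 0 := fun x =>
      abs_eq_zero.mp (le_antisymm (hM0 ▸ hx₀ x) (abs_nonneg _))
    rw [hM0, Finset.sum_eq_zero (fun x _ => by rw [hf0 x, zero_mul])]
    norm_num
  have hMpos : 0 < M := lt_of_le_of_ne (abs_nonneg _) (Ne.symm hM0)
  -- basic facts about Q
  have hQsym : ∀ x y, Q x y = Q y x := fun x y => (hsymm.apply x y).symm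
  have hQle1 : ∀ a b, Q a b ≤ 1 := by
    intro a b
    rw [← hrow a]
    exact Finset.single_le_sum (fun y _ => hnn a y) (Finset.mem_univ b)
  have hGadj : ∀ a b : Fin n, G.Adj a b → a ≠ b ∧ 0 < Q a b := by
    intro a b hab
    rw [hGdef, SimpleGraph.fromRel_adj] at hab
    refine ⟨hab.1, hab.2.elim id fun h => ?_⟩
    rw [hQsym a b]; exact h
  have hQedge : ∀ a b, a ≠ b → 0 < Q a b → c * n ≤ Q a b := by
    intro a b h1' h2'
    have h3 := hmin a b h1' h2'
    calc c * n ≤ (Q a b / n) * n := by nlinarith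
      _ = Q a b := div_mul_cancel₀ _ (ne_of_gt hNpos)
  -- the matrix A = Q²
  set A := Q ^ 2 with hAdef
  have hAapp : ∀ x y, A x y = ∑ z, Q x z * Q z y := by
    intro x y; rw [hAdef, pow_two, Matrix.mul_apply]
  have hAnn : ∀ x y, 0 ≤ A x y := by
    intro x y; rw [hAapp]
    exact Finset.sum_nonneg fun z _ => mul_nonneg (hnn x z) (hnn z y)
  have hArow : ∀ x, ∑ y, A x y = 1 := by
    intro x
    calc ∑ y, A x y = ∑ y, ∑ z, Q x z * Q z y :=
          Finset.sum_congr rfl fun y _ => hAapp x y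
      _ = ∑ z, ∑ y, Q x z * Q z y := Finset.sum_comm
      _ = ∑ z, Q x z * ∑ y, Q z y :=
          Finset.sum_congr rfl fun z _ => (Finset.mul_sum _ _ _).symm
      _ = 1 := by simp [hrow]
  have hAsym : ∀ x y, A x y = A y x := by
    intro x y
    rw [hAapp, hAapp]
    exact Finset.sum_congr rfl fun z _ => by rw [hQsym x z, hQsym z y]; ring
  have hAcol : ∀ y, ∑ x, A x y = 1 := by
    intro y
    rw [Finset.sum_congr rfl fun x _ => hAsym x y]
    exact hArow y
  -- the sign-corrected function F
  set ε : ℝ := if 0 ≤ f x₀ then 1 else -1 with hεdef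
  have hε2 : ε ^ 2 = 1 := by rw [hεdef]; split_ifs <;> norm_num
  set F : Fin n → ℝ := fun x => ε * f x with hFdef
  have hFx₀ : F x₀ = M := by
    show ε * f x₀ = M
    rw [hεdef, hMdef]
    by_cases hsgn : 0 ≤ f x₀
    · rw [if_pos hsgn, one_mul, abs_of_nonneg hsgn]
    · rw [if_neg hsgn, abs_of_neg (not_le.mp hsgn)]; ring
  have hFsq : ∀ x, F x ^ 2 = f x ^ 2 := by
    intro x
    show (ε * f x) ^ 2 = f x ^ 2
    rw [mul_pow, hε2, one_mul]
  have hFle : ∀ x, F x ≤ M := by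
    intro x
    have h1' : F x ≤ |F x| := le_abs_self _
    have h2' : |F x| = |f x| := by
      show |ε * f x| = |f x|
      rw [abs_mul]
      have : |ε| = 1 := by rw [hεdef]; split_ifs <;> norm_num
      rw [this, one_mul]
    rw [h2'] at h1'
    exact h1'.trans (hx₀ x)
  have hF0 : ∑ x, F x = 0 := by
    show ∑ x, ε * f x = 0
    rw [← Finset.mul_sum, h0, mul_zero]
  have hsum2 : ∑ x, f x ^ 2 ≤ (n:ℝ) := by
    have h := mul_le_mul_of_nonneg_left h1 (le_of_lt hNpos)
    rw [← mul_assoc, mul_one_div, div_self (ne_of_gt hNpos), one_mul, mul_one] at h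
    exact h
  -- Dirichlet form identity
  have hmv : ∀ x, ((1 - A).mulVec f) x = f x - ∑ y, A x y * f y := by
    intro x
    rw [Matrix.sub_mulVec]
    show (1 : Matrix (Fin n) (Fin n) ℝ).mulVec f x - A.mulVec f x = _
    rw [Matrix.one_mulVec]
    congr 1
  have hFF : ∀ x y : Fin n, F x * F y = f x * f y := by
    intro x y
    show (ε * f x) * (ε * f y) = f x * f y
    have : ε * f x * (ε * f y) = ε ^ 2 * (f x * f y) := by ring
    rw [this, hε2, one_mul]
  have hBsum : ∑ x, f x * ((1 - A).mulVec f x)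
      = (∑ x, F x ^ 2) - ∑ x, ∑ y, A x y * (F x * F y) := by
    have e4 : ∀ x, f x * ((1 - A).mulVec f x) = f x ^ 2 - ∑ y, A x y * (f x * f y) := by
      intro x
      rw [hmv x, mul_sub, Finset.mul_sum]
      have h5 : ∑ y, f x * (A x y * f y) = ∑ y, A x y * (f x * f y) :=
        Finset.sum_congr rfl fun y _ => by ring
      rw [h5, ← sq]
    rw [Finset.sum_congr rfl fun x _ => e4 x, Finset.sum_sub_distrib]
    congr 1
    · exact Finset.sum_congr rfl fun x _ => (hFsq x).symm
    · exact Finset.sum_congr rfl fun x _ => Finset.sum_congr rfl fun y _ => by rw [hFF]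
  have hexp : ∑ x, ∑ y, A x y * (F x - F y)^2
      = 2 * (∑ x, F x ^ 2) - 2 * ∑ x, ∑ y, A x y * (F x * F y) := by
    have e1 : ∀ x, ∑ y, A x y * (F x - F y)^2
        = F x ^ 2 - 2 * (∑ y, A x y * (F x * F y)) + ∑ y, A x y * F y ^ 2 := by
      intro x
      have h6 : ∀ y, A x y * (F x - F y)^2
          = A x y * F x ^ 2 - 2 * (A x y * (F x * F y)) + A x y * F y ^ 2 := fun y => by ring
      rw [Finset.sum_congr rfl fun y _ => h6 y, Finset.sum_add_distrib,
        Finset.sum_sub_distrib]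
      have h7 : ∑ y, A x y * F x ^ 2 = F x ^ 2 := by
        rw [← Finset.sum_mul, hArow, one_mul]
      have h8 : ∑ y, 2 * (A x y * (F x * F y)) = 2 * ∑ y, A x y * (F x * F y) :=
        (Finset.mul_sum _ _ _).symm
      rw [h7, h8]
    rw [Finset.sum_congr rfl fun x _ => e1 x, Finset.sum_add_distrib, Finset.sum_sub_distrib]
    have e2 : ∑ x, ∑ y, A x y * F y ^ 2 = ∑ x, F x ^ 2 := by
      rw [Finset.sum_comm]
      refine Finset.sum_congr rfl fun y _ => ?_
      rw [← Finset.sum_mul, hAcol, one_mul]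
    have e3 : ∑ x, 2 * ∑ y, A x y * (F x * F y)
        = 2 * ∑ x, ∑ y, A x y * (F x * F y) := (Finset.mul_sum _ _ _).symm
    rw [e2, e3]
    ring
  have hId : ∑ x, f x * ((1 - A).mulVec f x)
      = (1/2) * ∑ x, ∑ y, A x y * (F x - F y)^2 := by
    rw [hBsum, hexp]; ring
  -- a point where F is nonpositive
  obtain ⟨y, hy⟩ : ∃ y, F y ≤ 0 := by
    by_contra hcon
    push_neg at hcon
    have hpos : 0 < ∑ x, F x :=
      Finset.sum_pos (fun x _ => hcon x) ⟨x₀, Finset.mem_univ x₀⟩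
    rw [hF0] at hpos
    exact lt_irrefl 0 hpos
  have hx₀y : x₀ ≠ y := by
    intro h
    rw [← h] at hy
    rw [hFx₀] at hy
    linarith
  -- the path
  obtain ⟨p0⟩ := hconn.preconnected x₀ y
  set w := p0.bypass with hwdef
  have hw : w.IsPath := p0.bypass_isPath
  set L := w.length with hLdef
  set v : ℕ → Fin n := w.getVert with hvdef
  have hv0 : v 0 = x₀ := w.getVert_zero
  have hvL : v L = y := w.getVert_length
  have hinj : ∀ i ≤ L, ∀ j ≤ L, v i = v j → i = j := walk_getVert_inj' w hw
  have hL1 : 1 ≤ L := by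
    by_contra hcon
    push_neg at hcon
    apply hx₀y
    have h0' : L = 0 := by omega
    rw [← hv0, ← hvL, h0']
  have hLn : L + 1 ≤ n := by
    have h := hw.support_nodup.length_le_card
    rw [SimpleGraph.Walk.length_support] at h
    simpa using h
  have hadjv : ∀ i, i < L → G.Adj (v i) (v (i+1)) := fun i hi => w.adj_getVert_succ hi
  -- the nonnegative part g of F
  set g : Fin n → ℝ := fun x => max (F x) 0 with hgdef
  have hg0 : ∀ x, 0 ≤ g x := fun x => le_max_right _ _
  have hgsq : ∀ x, g x ^ 2 ≤ f x ^ 2 := by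
    intro x
    rw [← hFsq]
    show (max (F x) 0) ^ 2 ≤ F x ^ 2
    rcases le_or_gt (F x) 0 with h | h
    · rw [max_eq_right h]; simpa using sq_nonneg (F x)
    · rw [max_eq_left h.le]
  have hgx₀ : g x₀ = M := by
    show max (F x₀) 0 = M
    rw [hFx₀]
    exact max_eq_left hMpos.le
  have hgy : g y = 0 := max_eq_right hy
  have hglip : ∀ a b : Fin n, (g a - g b)^2 ≤ (F a - F b)^2 := by
    intro a b
    have h1' : |g a - g b| ≤ |F a - F b| := abs_max_sub_max_le_abs (F a) (F b) 0
    calc (g a - g b)^2 = |g a - g b|^2 := (sq_abs _).symm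
      _ ≤ |F a - F b|^2 := pow_le_pow_left₀ (abs_nonneg _) h1' 2
      _ = (F a - F b)^2 := sq_abs _
  -- the path increment sum
  set SΔ := ∑ i ∈ Finset.range L, (F (v i) - F (v (i+1)))^2 with hSΔdef
  have hSΔ0 : 0 ≤ SΔ := Finset.sum_nonneg fun i _ => sq_nonneg _
  have hΔg0 : 0 ≤ ∑ i ∈ Finset.range L, (g (v i) - g (v (i+1)))^2 :=
    Finset.sum_nonneg fun i _ => sq_nonneg _
  have hDg : ∑ i ∈ Finset.range L, (g (v i) - g (v (i+1)))^2 ≤ SΔ := by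
    rw [hSΔdef]
    exact Finset.sum_le_sum fun i _ => hglip _ _
  -- sum of g² along the path is at most n
  have hgsum : ∑ i ∈ Finset.range (L+1), (g (v i))^2 ≤ (n:ℝ) := by
    have hinj' : ∀ i ∈ Finset.range (L+1), ∀ j ∈ Finset.range (L+1), v i = v j → i = j := by
      intro i hi j hj hij
      rw [Finset.mem_range] at hi hj
      exact hinj i (by omega) j (by omega) hij
    have him : ∑ x ∈ (Finset.range (L+1)).image v, (g x)^2
        = ∑ i ∈ Finset.range (L+1), (g (v i))^2 := by
      refine Finset.sum_image ?_
      intro i hi j hj hij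
      exact hinj' i hi j hj hij
    calc ∑ i ∈ Finset.range (L+1), (g (v i))^2
        = ∑ x ∈ (Finset.range (L+1)).image v, (g x)^2 := him.symm
      _ ≤ ∑ x, (g x)^2 := Finset.sum_le_sum_of_subset_of_nonneg
          (Finset.subset_univ _) (fun x _ _ => sq_nonneg _)
      _ ≤ ∑ x, f x ^ 2 := Finset.sum_le_sum fun x _ => hgsq x
      _ ≤ (n:ℝ) := hsum2
  -- first path bound : M² ≤ n·SΔ
  have hP1 : M^2 ≤ (n:ℝ) * SΔ := by
    have hcs1 : (g (v 0) - g (v L))^2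
        ≤ (∑ i ∈ Finset.range L, (g (v i) - g (v (i+1)))^2) * (L : ℝ) :=
      tele_cs1 L (fun i => g (v i))
    rw [hv0, hvL, hgx₀, hgy, sub_zero] at hcs1
    have hLn' : (L:ℝ) ≤ (n:ℝ) := by exact_mod_cast (by omega : L ≤ n)
    have hmm : (∑ i ∈ Finset.range L, (g (v i) - g (v (i+1)))^2) * (L:ℝ) ≤ SΔ * (n:ℝ) :=
      mul_le_mul hDg hLn' (Nat.cast_nonneg L) hSΔ0
    calc M^2 ≤ SΔ * (n:ℝ) := le_trans hcs1 hmm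
      _ = (n:ℝ) * SΔ := mul_comm _ _
  -- second path bound : M⁴ ≤ 4n·SΔ
  have hP2 : M^4 ≤ 4*(n:ℝ) * SΔ := by
    have hcs2 : ((g (v 0))^2 - (g (v L))^2)^2
        ≤ (∑ i ∈ Finset.range L, (g (v i) + g (v (i+1)))^2) *
            (∑ i ∈ Finset.range L, (g (v i) - g (v (i+1)))^2) :=
      tele_cs2 L (fun i => g (v i))
    rw [hv0, hvL, hgx₀, hgy] at hcs2
    have hM4 : (M^2 - (0:ℝ)^2)^2 = M^4 := by ring
    rw [hM4] at hcs2
    have hplus : ∑ i ∈ Finset.range L, (g (v i) + g (v (i+1)))^2 ≤ 4*(n:ℝ) := by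
      have h2 : ∀ i ∈ Finset.range L,
          (g (v i) + g (v (i+1)))^2 ≤ 2*(g (v i))^2 + 2*(g (v (i+1)))^2 :=
        fun i _ => by nlinarith [sq_nonneg (g (v i) - g (v (i+1)))]
      have hstep : ∑ i ∈ Finset.range L, (g (v i) + g (v (i+1)))^2
          ≤ ∑ i ∈ Finset.range L, (2*(g (v i))^2 + 2*(g (v (i+1)))^2) :=
        Finset.sum_le_sum h2
      have hsplit : ∑ i ∈ Finset.range L, (2*(g (v i))^2 + 2*(g (v (i+1)))^2)
          = 2*(∑ i ∈ Finset.range L, (g (v i))^2)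
            + 2*(∑ i ∈ Finset.range L, (g (v (i+1)))^2) := by
        rw [Finset.sum_add_distrib, Finset.mul_sum, Finset.mul_sum]
      have hsub1 : ∑ i ∈ Finset.range L, (g (v i))^2
          ≤ ∑ i ∈ Finset.range (L+1), (g (v i))^2 :=
        Finset.sum_le_sum_of_subset_of_nonneg
          (Finset.range_subset_range.mpr (by omega)) (fun i _ _ => sq_nonneg _)
      have hsub2 : ∑ i ∈ Finset.range (L+1), (g (v i))^2
          = (∑ i ∈ Finset.range L, (g (v (i+1)))^2) + (g (v 0))^2 :=
        Finset.sum_range_succ' (fun i => (g (v i))^2) L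
      have hsub2' : ∑ i ∈ Finset.range L, (g (v (i+1)))^2
          ≤ ∑ i ∈ Finset.range (L+1), (g (v i))^2 := by
        rw [hsub2]
        nlinarith [sq_nonneg (g (v 0))]
      linarith [hgsum]
    have hmm2 : (∑ i ∈ Finset.range L, (g (v i) + g (v (i+1)))^2) *
        (∑ i ∈ Finset.range L, (g (v i) - g (v (i+1)))^2) ≤ (4*(n:ℝ)) * SΔ :=
      mul_le_mul hplus hDg hΔg0 (by positivity)
    exact le_trans hcs2 hmm2
  -- lower bound on A along edges
  have hAedge : ∀ a b : Fin n, G.Adj a b → 2*α*(c*(n:ℝ)) ≤ A a b := by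
    intro a b hab
    obtain ⟨hab1, hab2⟩ := hGadj a b hab
    have hQab : c * n ≤ Q a b := hQedge a b hab1 hab2
    have hcn0 : (0:ℝ) ≤ c * n := by positivity
    have h1' : α * (c*n) ≤ Q a a * Q a b :=
      mul_le_mul (hdiag a) hQab hcn0 (hnn a a)
    have h2' : (c*n) * α ≤ Q a b * Q b b :=
      mul_le_mul hQab (hdiag b) (le_of_lt hα) (hnn a b)
    have hpair : ∑ z ∈ ({a, b} : Finset (Fin n)), Q a z * Q z b
        = Q a a * Q a b + Q a b * Q b b := Finset.sum_pair hab1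
    calc 2*α*(c*(n:ℝ)) = α * (c*n) + (c*n) * α := by ring
      _ ≤ Q a a * Q a b + Q a b * Q b b := by linarith
      _ = ∑ z ∈ ({a, b} : Finset (Fin n)), Q a z * Q z b := hpair.symm
      _ ≤ ∑ z, Q a z * Q z b := Finset.sum_le_sum_of_subset_of_nonneg
          (Finset.subset_univ _) (fun z _ _ => mul_nonneg (hnn a z) (hnn z b))
      _ = A a b := (hAapp a b).symm
  -- the crucial numeric fact : α·cn ≤ 1/4
  have hkey : α * (c * (n:ℝ)) ≤ 1/4 := by
    obtain ⟨he1, he2⟩ := hGadj _ _ (hadjv 0 hL1)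
    have e1 : c * n ≤ Q (v 0) (v 1) := hQedge _ _ he1 he2
    have e2 : Q (v 0) (v 0) + Q (v 0) (v 1) ≤ 1 := by
      rw [← hrow (v 0)]
      have hsp : ∑ z ∈ ({v 0, v 1} : Finset (Fin n)), Q (v 0) z
          = Q (v 0) (v 0) + Q (v 0) (v 1) := Finset.sum_pair he1
      rw [← hsp]
      exact Finset.sum_le_sum_of_subset_of_nonneg (Finset.subset_univ _)
        (fun z _ _ => hnn (v 0) z)
    have e3 : α ≤ Q (v 0) (v 0) := hdiag _
    nlinarith [sq_nonneg (c*(n:ℝ) - 1/2), mul_pos hc hNpos]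
  -- lower bound on the double sum
  have hT : 4*α*(c*(n:ℝ)) * SΔ ≤ ∑ x, ∑ y, A x y * (F x - F y)^2 := by
    set φ : Fin n × Fin n → ℝ := fun p => A p.1 p.2 * (F p.1 - F p.2)^2 with hφdef
    have hφ0 : ∀ p, 0 ≤ φ p := fun p => mul_nonneg (hAnn _ _) (sq_nonneg _)
    set e : ℕ × Bool → Fin n × Fin n :=
      fun q => cond q.2 (v q.1, v (q.1+1)) (v (q.1+1), v q.1) with hedef
    set s : Finset (ℕ × Bool) := Finset.range L ×ˢ Finset.univ with hsdef
    have heinj : ∀ p ∈ s, ∀ q ∈ s, e p = e q → p = q := by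
      rintro ⟨i, b⟩ hp ⟨j, b'⟩ hq heq
      rw [hsdef, Finset.mem_product, Finset.mem_range] at hp hq
      have hi : i < L := hp.1
      have hj : j < L := hq.1
      cases b <;> cases b' <;>
        simp only [hedef, cond_true, cond_false, Prod.mk.injEq] at heq ⊢
      · exact ⟨by have := hinj (i+1) (by omega) (j+1) (by omega) heq.1; omega, trivial⟩
      · exfalso
        have a1 := hinj (i+1) (by omega) j (by omega) heq.1
        have a2 := hinj i (by omega) (j+1) (by omega) heq.2
        omega
      · exfalso
        have a1 := hinj i (by omega) (j+1) (by omega) heq.1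
        have a2 := hinj (i+1) (by omega) j (by omega) heq.2
        omega
      · exact ⟨hinj i (by omega) j (by omega) heq.1, trivial⟩
    have himage : ∑ q ∈ s, φ (e q) ≤ ∑ x, ∑ y, A x y * (F x - F y)^2 := by
      rw [← Finset.sum_image heinj]
      calc ∑ p ∈ s.image e, φ p
          ≤ ∑ p ∈ Finset.univ ×ˢ Finset.univ, φ p :=
            Finset.sum_le_sum_of_subset_of_nonneg
              (fun p _ => Finset.mem_product.mpr ⟨Finset.mem_univ _, Finset.mem_univ _⟩)
              (fun p _ _ => hφ0 p)
        _ = ∑ x, ∑ y, φ (x, y) := by rw [Finset.sum_product]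
        _ = ∑ x, ∑ y, A x y * (F x - F y)^2 := rfl
    have hsum_s : ∑ q ∈ s, φ (e q)
        = ∑ i ∈ Finset.range L, (φ (v i, v (i+1)) + φ (v (i+1), v i)) := by
      rw [hsdef, Finset.sum_product]
      refine Finset.sum_congr rfl fun i _ => ?_
      rw [Fintype.sum_bool]
      simp only [hedef, cond_true, cond_false]
    have hterm : ∀ i ∈ Finset.range L,
        4*α*(c*(n:ℝ)) * (F (v i) - F (v (i+1)))^2
          ≤ φ (v i, v (i+1)) + φ (v (i+1), v i) := by
      intro i hi
      have hAe := hAedge (v i) (v (i+1)) (hadjv i (Finset.mem_range.mp hi))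
      have hA2 : 2*α*(c*(n:ℝ)) ≤ A (v (i+1)) (v i) := by
        rw [← hAsym (v i) (v (i+1))]
        exact hAe
      simp only [hφdef]
      nlinarith [sq_nonneg (F (v i) - F (v (i+1)))]
    calc 4*α*(c*(n:ℝ)) * SΔ
        = ∑ i ∈ Finset.range L, 4*α*(c*(n:ℝ)) * (F (v i) - F (v (i+1)))^2 := by
          rw [hSΔdef, Finset.mul_sum]
      _ ≤ ∑ i ∈ Finset.range L, (φ (v i, v (i+1)) + φ (v (i+1), v i)) :=
          Finset.sum_le_sum hterm
      _ = ∑ q ∈ s, φ (e q) := hsum_s.symm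
      _ ≤ ∑ x, ∑ y, A x y * (F x - F y)^2 := himage
  -- final assembly
  rw [hId]
  have hRform : 2*(α*c)*SΔ
      ≤ (1/(n:ℝ)) * ((1/2) * ∑ x, ∑ y, A x y * (F x - F y)^2) := by
    have h1' : 2*(α*c)*SΔ = (1/(n:ℝ)) * ((1/2) * (4*α*(c*(n:ℝ))*SΔ)) := by
      field_simp
      ring
    rw [h1']
    apply mul_le_mul_of_nonneg_left _ (by positivity : (0:ℝ) ≤ 1/(n:ℝ))
    apply mul_le_mul_of_nonneg_left hT (by norm_num)
  refine le_trans ?_ hRform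
  have t1 : 0 ≤ (α*c)*SΔ*(1/4 - α*(c*(n:ℝ))) :=
    mul_nonneg (mul_nonneg (mul_pos hα hc).le hSΔ0) (by linarith)
  have t3 : 0 ≤ (α*c)*SΔ := mul_nonneg (mul_pos hα hc).le hSΔ0
  rcases max_cases (2*M^2) (M^4) with ⟨hmx, _⟩ | ⟨hmx, _⟩ <;> rw [hmx]
  · have t2 : 0 ≤ (α*c)^2 * ((n:ℝ)*SΔ - M^2) :=
      mul_nonneg (sq_nonneg _) (by linarith)
    nlinarith [t1, t2, t3]
  · have t4 : 0 ≤ (α*c)^2 * (4*(n:ℝ)*SΔ - M^4) :=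
      mul_nonneg (sq_nonneg _) (by linarith)
    nlinarith [t1, t4, t3]
end

section
/- Let n ≥ 1, let α > 0 and c > 0, and let (Q_i)_{i≥1} be a sequence of n×n real symmetric stochastic matrices each satisfying: (i) Q_i(x,x) ≥ α for every x; (ii) the graph on the index set with an edge between x ≠ y whenever Q_i(x,y) > 0 is connected; (iii) c ≤ Q_i(x,y)/n for every x ≠ y with Q_i(x,y) > 0. Then for every k ≥ 0 and every f ∈ ℝⁿ with ∑ₓ f(x) = 0 and (1/n)·∑ₓ f(x)² ≤ 1, one has ‖Q_k · Q_{k−1} ⋯ Q_1 · f‖_∞ ≤ min{ ((2αc)²(k+1))^{−1/2}, ((αc)²(2k+2))^{−1/4} }, where ‖g‖_∞ = maxₓ |g(x)| and the empty product (k = 0) is the identity. -/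
open Finset SimpleGraph


lemma aux_CS1 (L : ℕ) (a : ℕ → ℝ) :
    (a 0 - a L)^2 ≤ L * ∑ j ∈ range L, (a j - a (j+1))^2 := by
  have h1 : a 0 - a L = ∑ j ∈ range L, (a j - a (j+1)) := (Finset.sum_range_sub' a L).symm
  have h2 := Finset.sum_mul_sq_le_sq_mul_sq (range L) (fun _ => (1:ℝ)) (fun j => a j - a (j+1))
  simp only [one_mul, one_pow] at h2
  rw [h1]
  calc (∑ j ∈ range L, (a j - a (j+1)))^2 ≤ (∑ _j ∈ range L, (1:ℝ)) * ∑ j ∈ range L, (a j - a (j+1))^2 := h2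
    _ = L * ∑ j ∈ range L, (a j - a (j+1))^2 := by simp

lemma aux_CS2 (L : ℕ) (a : ℕ → ℝ) (h0 : 0 ≤ a 0) (hL : a L ≤ 0) :
    (a 0)^4 ≤ (4 * ∑ j ∈ range (L+1), (a j)^2) * ∑ j ∈ range L, (a j - a (j+1))^2 := by
  set b : ℕ → ℝ := fun j => max (a j) 0 with hb
  have hbnn : ∀ j, 0 ≤ b j := fun j => le_max_right _ _
  have hb0 : b 0 = a 0 := max_eq_left h0
  have hbL : b L = 0 := max_eq_right hL
  have htel : (a 0)^2 = ∑ j ∈ range L, ((b j - b (j+1)) * (b j + b (j+1))) := by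
    have : ∀ j, (b j - b (j+1)) * (b j + b (j+1)) = b j ^2 - b (j+1)^2 := by intro j; ring
    simp only [this]
    rw [Finset.sum_range_sub' (fun j => b j ^ 2) L, hb0, hbL]
    ring
  have hCS := Finset.sum_mul_sq_le_sq_mul_sq (range L) (fun j => b j - b (j+1)) (fun j => b j + b (j+1))
  have h4 : (a 0)^4 = ((a 0)^2)^2 := by ring
  rw [h4, htel]
  refine le_trans hCS ?_
  rw [mul_comm]
  apply mul_le_mul
  · -- ∑ (b j + b (j+1))^2 ≤ 4 * ∑ a j ^2
    have step : ∀ j ∈ range L, (b j + b (j+1))^2 ≤ 2*(b j)^2 + 2*(b (j+1))^2 := by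
      intro j _; nlinarith [sq_nonneg (b j - b (j+1))]
    refine le_trans (Finset.sum_le_sum step) ?_
    rw [Finset.sum_add_distrib, ← Finset.mul_sum, ← Finset.mul_sum]
    have hba : ∀ j, (b j)^2 ≤ (a j)^2 := by
      intro j
      rcases le_or_gt (a j) 0 with h | h
      · rw [show b j = 0 from max_eq_right h]; simp; positivity
      · rw [show b j = a j from max_eq_left h.le]
    have e1 : ∑ j ∈ range L, (b j)^2 ≤ ∑ j ∈ range (L+1), (a j)^2 := by
      refine le_trans (Finset.sum_le_sum (fun j _ => hba j)) ?_
      apply Finset.sum_le_sum_of_subset_of_nonneg (Finset.range_subset_range.2 (Nat.le_succ L))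
      intros; positivity
    have e2 : ∑ j ∈ range L, (b (j+1))^2 ≤ ∑ j ∈ range (L+1), (a j)^2 := by
      have : ∑ j ∈ range L, (b (j+1))^2 ≤ ∑ j ∈ range L, (a (j+1))^2 :=
        Finset.sum_le_sum (fun j _ => hba (j+1))
      refine le_trans this ?_
      have := Finset.sum_range_succ' (fun j => (a j)^2) L
      have h0sq : (0:ℝ) ≤ (a 0)^2 := by positivity
      linarith [this]
    linarith
  · -- ∑ (b j - b (j+1))^2 ≤ ∑ (a j - a (j+1))^2
    apply Finset.sum_le_sum
    intro j _
    have h := abs_max_sub_max_le_abs (a j) (a (j+1)) 0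
    calc (b j - b (j+1))^2 = |b j - b (j+1)|^2 := (sq_abs _).symm
      _ ≤ |a j - a (j+1)|^2 := by nlinarith [abs_nonneg (b j - b (j+1)), abs_nonneg (a j - a (j+1))]
      _ = (a j - a (j+1))^2 := sq_abs _
  · positivity
  · positivity

lemma quad_identity (n : ℕ) (A : Matrix (Fin n) (Fin n) ℝ) (hsymm : A.IsSymm)
    (hrow : ∀ x, ∑ y, A x y = 1) (g : Fin n → ℝ) :
    ∑ x, (g x)^2 - ∑ x, ∑ y, A x y * g x * g y
      = (1/2) * ∑ x, ∑ y, A x y * (g x - g y)^2 := by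
  have hcol : ∀ y, ∑ x, A x y = 1 := by
    intro y
    have := hrow y
    rw [← this]
    apply Finset.sum_congr rfl
    intro x _
    exact (Matrix.IsSymm.apply hsymm x y).symm ▸ rfl
  have expand : ∀ x y : Fin n, A x y * (g x - g y)^2
      = A x y * (g x)^2 + A x y * (g y)^2 - 2 * (A x y * g x * g y) := by
    intro x y; ring
  simp only [expand, Finset.sum_sub_distrib, Finset.sum_add_distrib]
  have t1 : ∑ x, ∑ y, A x y * (g x)^2 = ∑ x, (g x)^2 := by
    apply Finset.sum_congr rfl; intro x _
    rw [← Finset.sum_mul, hrow x, one_mul]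
  have t2 : ∑ x : Fin n, ∑ y, A x y * (g y)^2 = ∑ x, (g x)^2 := by
    rw [Finset.sum_comm]
    apply Finset.sum_congr rfl; intro y _
    rw [← Finset.sum_mul, hcol y, one_mul]
  have t3 : ∑ x : Fin n, ∑ y, 2 * (A x y * g x * g y) = 2 * ∑ x, ∑ y, A x y * g x * g y := by
    rw [Finset.mul_sum]; apply Finset.sum_congr rfl; intro x _; rw [Finset.mul_sum]
  rw [t1, t2, t3]
  ring

lemma mulVec_sq (n : ℕ) (Q : Matrix (Fin n) (Fin n) ℝ) (hsymm : Q.IsSymm) (g : Fin n → ℝ) :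
    ∑ x, (Q.mulVec g x)^2 = ∑ x, ∑ y, (Q * Q) x y * g x * g y := by
  have key : ∀ y z : Fin n, (∑ x, Q x y * Q x z) = (Q * Q) y z := by
    intro y z
    rw [Matrix.mul_apply]
    apply Finset.sum_congr rfl
    intro x _
    rw [hsymm.apply]
  simp only [Matrix.mulVec, dotProduct, pow_two]
  calc ∑ x, (∑ y, Q x y * g y) * (∑ z, Q x z * g z)
      = ∑ x, ∑ y, ∑ z, (Q x y * Q x z) * (g y * g z) := by
        apply Finset.sum_congr rfl; intro x _
        rw [Finset.sum_mul_sum]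
        apply Finset.sum_congr rfl; intro y _
        apply Finset.sum_congr rfl; intro z _
        ring
    _ = ∑ y, ∑ z, (∑ x, Q x y * Q x z) * (g y * g z) := by
        rw [Finset.sum_comm]
        apply Finset.sum_congr rfl; intro y _
        rw [Finset.sum_comm]
        apply Finset.sum_congr rfl; intro z _
        rw [Finset.sum_mul]
    _ = ∑ y, ∑ z, (Q * Q) y z * g y * g z := by
        apply Finset.sum_congr rfl; intro y _
        apply Finset.sum_congr rfl; intro z _
        rw [key]; ring

section
variable {n : ℕ} (Q : Matrix (Fin n) (Fin n) ℝ)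

lemma contract_sq (hnn : ∀ x y, 0 ≤ Q x y) (hrow : ∀ x, ∑ y, Q x y = 1)
    (hsymm : Q.IsSymm) (g : Fin n → ℝ) :
    ∑ x, (Q.mulVec g x)^2 ≤ ∑ x, (g x)^2 := by
  have hcol : ∀ y, ∑ x, Q x y = 1 := by
    intro y; rw [← hrow y]; exact Finset.sum_congr rfl (fun x _ => by rw [hsymm.apply])
  have step : ∀ x, (Q.mulVec g x)^2 ≤ ∑ y, Q x y * (g y)^2 := by
    intro x
    have hcs := Finset.sum_mul_sq_le_sq_mul_sq Finset.univ
      (fun y => Real.sqrt (Q x y)) (fun y => Real.sqrt (Q x y) * g y)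
    have e1 : ∀ y, Real.sqrt (Q x y) * (Real.sqrt (Q x y) * g y) = Q x y * g y := by
      intro y; rw [← mul_assoc, Real.mul_self_sqrt (hnn x y)]
    have e2 : ∀ y, (Real.sqrt (Q x y))^2 = Q x y := fun y => Real.sq_sqrt (hnn x y)
    have e3 : ∀ y, (Real.sqrt (Q x y) * g y)^2 = Q x y * (g y)^2 := by
      intro y; rw [mul_pow, e2]
    simp only [e1, e3, e2] at hcs
    calc (Q.mulVec g x)^2 = (∑ y, Q x y * g y)^2 := by rfl
      _ ≤ (∑ y, Q x y) * ∑ y, Q x y * (g y)^2 := hcs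
      _ = ∑ y, Q x y * (g y)^2 := by rw [hrow x, one_mul]
  calc ∑ x, (Q.mulVec g x)^2 ≤ ∑ x, ∑ y, Q x y * (g y)^2 := Finset.sum_le_sum (fun x _ => step x)
    _ = ∑ y, (g y)^2 := by
        rw [Finset.sum_comm]
        exact Finset.sum_congr rfl (fun y _ => by rw [← Finset.sum_mul, hcol y, one_mul])

lemma sup_contract (hnn : ∀ x y, 0 ≤ Q x y) (hrow : ∀ x, ∑ y, Q x y = 1)
    (g : Fin n → ℝ) (M : ℝ) (hM : ∀ x, |g x| ≤ M) (x : Fin n) : |Q.mulVec g x| ≤ M := by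
  have : |Q.mulVec g x| ≤ ∑ y, |Q x y * g y| := by
    show |∑ y, Q x y * g y| ≤ _
    exact Finset.abs_sum_le_sum_abs _ _
  refine le_trans this ?_
  have : ∀ y, |Q x y * g y| ≤ Q x y * M := by
    intro y
    rw [abs_mul, abs_of_nonneg (hnn x y)]
    exact mul_le_mul_of_nonneg_left (hM y) (hnn x y)
  refine le_trans (Finset.sum_le_sum (fun y _ => this y)) ?_
  rw [← Finset.sum_mul, hrow x, one_mul]

lemma mean_preserved (hrow : ∀ x, ∑ y, Q x y = 1) (hsymm : Q.IsSymm)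
    (g : Fin n → ℝ) (hg : ∑ x, g x = 0) : ∑ x, Q.mulVec g x = 0 := by
  have hcol : ∀ y, ∑ x, Q x y = 1 := by
    intro y; rw [← hrow y]; exact Finset.sum_congr rfl (fun x _ => by rw [hsymm.apply])
  calc ∑ x, Q.mulVec g x = ∑ x, ∑ y, Q x y * g y := rfl
    _ = ∑ y, (∑ x, Q x y) * g y := by
        rw [Finset.sum_comm]; exact Finset.sum_congr rfl (fun y _ => (Finset.sum_mul _ _ _).symm)
    _ = ∑ y, g y := by simp only [hcol, one_mul]
    _ = 0 := hg

lemma sq_offdiag (α : ℝ) (hnn : ∀ x y, 0 ≤ Q x y) (hdiag : ∀ x, α ≤ Q x x) (hα : 0 ≤ α)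
    (x y : Fin n) (hxy : x ≠ y) : 2 * α * Q x y ≤ (Q * Q) x y := by
  rw [Matrix.mul_apply]
  have hsub : ({x, y} : Finset (Fin n)) ⊆ Finset.univ := Finset.subset_univ _
  have : ∑ z ∈ ({x, y} : Finset (Fin n)), Q x z * Q z y ≤ ∑ z, Q x z * Q z y := by
    apply Finset.sum_le_sum_of_subset_of_nonneg hsub
    intro z _ _; exact mul_nonneg (hnn x z) (hnn z y)
  refine le_trans ?_ this
  rw [Finset.sum_pair hxy]
  have h1 : α * Q x y ≤ Q x x * Q x y := mul_le_mul_of_nonneg_right (hdiag x) (hnn x y)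
  have h2 : α * Q x y ≤ Q x y * Q y y := by
    rw [mul_comm (Q x y)]; exact mul_le_mul_of_nonneg_right (hdiag y) (hnn x y)
  linarith

lemma sq_row (hrow : ∀ x, ∑ y, Q x y = 1) (x : Fin n) : ∑ y, (Q * Q) x y = 1 := by
  simp only [Matrix.mul_apply]
  rw [Finset.sum_comm]
  calc ∑ z, ∑ y, Q x z * Q z y = ∑ z, Q x z * ∑ y, Q z y := by
        exact Finset.sum_congr rfl (fun z _ => (Finset.mul_sum _ _ _).symm)
    _ = 1 := by simp only [hrow, mul_one]

end

lemma getVert_injOn' {V : Type*} {G : SimpleGraph V} {u v : V} {w : G.Walk u v} (hw : w.IsPath) :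
    ∀ i ≤ w.length, ∀ j ≤ w.length, w.getVert i = w.getVert j → i = j := by
  induction w with
  | nil => intro i hi j hj _; simp at hi hj; omega
  | cons h p ih =>
    rw [SimpleGraph.Walk.cons_isPath_iff] at hw
    intro i hi j hj hij
    match i, j with
    | 0, 0 => rfl
    | 0, (j+1) =>
      exfalso
      apply hw.2
      rw [SimpleGraph.Walk.mem_support_iff_exists_getVert]
      refine ⟨j, ?_, by simpa using hj⟩
      rw [show p.getVert j = (SimpleGraph.Walk.cons h p).getVert (j+1) from rfl, ← hij,
        SimpleGraph.Walk.getVert_zero]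
    | (i+1), 0 =>
      exfalso
      apply hw.2
      rw [SimpleGraph.Walk.mem_support_iff_exists_getVert]
      refine ⟨i, ?_, by simpa using hi⟩
      rw [show p.getVert i = (SimpleGraph.Walk.cons h p).getVert (i+1) from rfl, hij,
        SimpleGraph.Walk.getVert_zero]
    | (i+1), (j+1) =>
      have := ih hw.1 i (by simpa using hi) j (by simpa using hj) hij
      omega

set_option maxHeartbeats 1000000 in
lemma key_step (n : ℕ) (α c : ℝ) (hα : 0 < α) (hc : 0 < c)
    (Q : Matrix (Fin n) (Fin n) ℝ)
    (hsymm : Q.IsSymm) (hnn : ∀ x y, 0 ≤ Q x y) (hrow : ∀ x, ∑ y, Q x y = 1)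
    (hdiag : ∀ x, α ≤ Q x x)
    (hconn : (SimpleGraph.fromRel fun x y => 0 < Q x y).Connected)
    (hmin : ∀ x y, x ≠ y → 0 < Q x y → c ≤ Q x y / n)
    (hacn : 4 * (α * c) * n ≤ 1)
    (g : Fin n → ℝ) (hmean : ∑ x, g x = 0) (hS : ∑ x, (g x)^2 ≤ n)
    (M : ℝ) (hM : ∀ x, |g x| ≤ M) (hMx : ∃ x, g x = M) :
    ∑ x, (Q.mulVec g x)^2 + 2*(α*c)^2 * n * max (2*M^2) (M^2*M^2) ≤ ∑ x, (g x)^2 := by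
  rcases hMx with ⟨xs, hxs⟩
  have hM0 : 0 ≤ M := le_trans (abs_nonneg _) (hM xs)
  rcases eq_or_lt_of_le hM0 with hM0' | hMpos
  · -- M = 0
    have : max (2*M^2) (M^2*M^2) = 0 := by rw [← hM0']; norm_num
    rw [this, mul_zero, add_zero]
    exact contract_sq Q hnn hrow hsymm g
  -- M > 0
  have hn0 : 0 < n := Fin.pos xs
  -- find y with g y ≤ 0
  have hy : ∃ y, g y ≤ 0 := by
    by_contra h
    push_neg at h
    have : 0 < ∑ x, g x := Finset.sum_pos (fun x _ => h x) ⟨xs, Finset.mem_univ xs⟩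
    linarith [hmean ▸ this]
  rcases hy with ⟨y, hgy⟩
  have hxy : xs ≠ y := by
    intro h; rw [← h, hxs] at hgy; linarith
  -- get a path
  set G := (SimpleGraph.fromRel fun x y => 0 < Q x y) with hG
  obtain ⟨w0⟩ := hconn.preconnected xs y
  set p := w0.toPath with hp
  set w := p.1 with hw
  have hpath : w.IsPath := p.2
  set L := w.length with hL
  have hLn : L + 1 ≤ n := by
    have := hpath.length_lt
    simpa using this
  set v : ℕ → Fin n := w.getVert with hv
  have hv0 : v 0 = xs := w.getVert_zero
  have hvL : v L = y := w.getVert_length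
  have hinj : ∀ i ≤ L, ∀ j ≤ L, v i = v j → i = j := getVert_injOn' hpath
  have hadj : ∀ j, j < L → v j ≠ v (j+1) ∧ 0 < Q (v j) (v (j+1)) := by
    intro j hj
    have := w.adj_getVert_succ hj
    simp only [hG, SimpleGraph.fromRel_adj] at this
    refine ⟨this.1, ?_⟩
    rcases this.2 with h | h
    · exact h
    · rwa [← hsymm.apply] at h
  set a : ℕ → ℝ := fun j => g (v j) with ha
  set D := ∑ j ∈ range L, (a j - a (j+1))^2 with hD
  have hDnn : 0 ≤ D := Finset.sum_nonneg (fun j _ => sq_nonneg _)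
  -- F1 : M^2 ≤ L * D ≤ n * D
  have hF1 : M^2 ≤ n * D := by
    have h1 : M ≤ a 0 - a L := by
      simp only [ha, hv0, hvL, hxs]
      linarith
    have h2 : M^2 ≤ (a 0 - a L)^2 := by nlinarith
    have h3 := aux_CS1 L a
    have hLn' : (L : ℝ) ≤ n := by exact_mod_cast Nat.le_of_succ_le hLn
    nlinarith
  -- F2 : M^4 ≤ 4 * n * D
  have hsupp_le : ∑ j ∈ range (L+1), (a j)^2 ≤ ∑ x, (g x)^2 := by
    have hinj' : ∀ i ∈ range (L+1), ∀ j ∈ range (L+1), v i = v j → i = j := by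
      intro i hi j hj hvij
      rw [Finset.mem_range] at hi hj
      exact hinj i (by omega) j (by omega) hvij
    have himg : ∑ j ∈ range (L+1), (a j)^2
        = ∑ x ∈ Finset.image v (range (L+1)), (g x)^2 :=
      (Finset.sum_image (f := fun x => (g x)^2) hinj').symm
    rw [himg]
    apply Finset.sum_le_sum_of_subset_of_nonneg (Finset.subset_univ _)
    intros; positivity
  have hF2 : M^2 * M^2 ≤ 4 * n * D := by
    have ha0M : a 0 = M := by show g (v 0) = M; rw [hv0, hxs]
    have h0 : 0 ≤ a 0 := by rw [ha0M]; exact hM0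
    have hLa : a L ≤ 0 := by show g (v L) ≤ 0; rw [hvL]; exact hgy
    have := aux_CS2 L a h0 hLa
    rw [ha0M] at this
    have h4 : (4 : ℝ) * ∑ j ∈ range (L+1), (a j)^2 ≤ 4 * n := by
      have := le_trans hsupp_le hS; linarith
    calc M^2*M^2 = M^4 := by ring
      _ ≤ (4 * ∑ j ∈ range (L+1), (a j)^2) * D := this
      _ ≤ 4 * n * D := by
          apply mul_le_mul_of_nonneg_right h4 hDnn
  -- F3 : the Dirichlet bound
  have hF3 : 2 * (α * c * n) * D ≤ ∑ x, (g x)^2 - ∑ x, (Q.mulVec g x)^2 := by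
    have hAsymm : (Q * Q).IsSymm := by
      unfold Matrix.IsSymm
      rw [Matrix.transpose_mul, hsymm.eq]
    have hArow : ∀ x, ∑ y, (Q * Q) x y = 1 := sq_row Q hrow
    have hAnn : ∀ x y, 0 ≤ (Q * Q) x y := by
      intro x y
      rw [Matrix.mul_apply]
      exact Finset.sum_nonneg (fun z _ => mul_nonneg (hnn x z) (hnn z y))
    have hid := quad_identity n (Q * Q) hAsymm hArow g
    have hmv := mulVec_sq n Q hsymm g
    set T : Fin n × Fin n → ℝ := fun p => (Q * Q) p.1 p.2 * (g p.1 - g p.2)^2 with hT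
    have hTnn : ∀ p : Fin n × Fin n, 0 ≤ T p := fun p => mul_nonneg (hAnn _ _) (sq_nonneg _)
    set e : ℕ × Bool → Fin n × Fin n :=
      fun jb => if jb.2 then (v jb.1, v (jb.1+1)) else (v (jb.1+1), v jb.1) with he
    have heinj : ∀ p ∈ (range L) ×ˢ (Finset.univ : Finset Bool),
        ∀ q ∈ (range L) ×ˢ (Finset.univ : Finset Bool), e p = e q → p = q := by
      rintro ⟨j, b⟩ hp ⟨j', b'⟩ hq hpq
      rw [Finset.mem_product, Finset.mem_range] at hp hq
      have hj := hp.1; have hj' := hq.1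
      have inj1 : ∀ i i', i ≤ L → i' ≤ L → v i = v i' → i = i' := fun i i' h1 h2 => hinj i h1 i' h2
      cases b <;> cases b' <;> simp only [he, if_true, if_false, Bool.false_eq_true, Prod.mk.injEq] at hpq
      · have h1 := inj1 _ _ (by omega) (by omega) hpq.1
        simp only [Prod.mk.injEq]
        exact ⟨by omega, trivial⟩
      · exfalso
        have h1 := inj1 _ _ (by omega) (by omega) hpq.1
        have h2 := inj1 _ _ (by omega) (by omega) hpq.2
        omega
      · exfalso
        have h1 := inj1 _ _ (by omega) (by omega) hpq.1
        have h2 := inj1 _ _ (by omega) (by omega) hpq.2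
        omega
      · have h1 := inj1 _ _ (by omega) (by omega) hpq.1
        simp only [Prod.mk.injEq]
        exact ⟨by omega, trivial⟩
    have hedge : ∀ j, j < L → 2 * (α * (c * n)) * (a j - a (j+1))^2 ≤ T (v j, v (j+1))
        ∧ 2 * (α * (c * n)) * (a j - a (j+1))^2 ≤ T (v (j+1), v j) := by
      intro j hj
      obtain ⟨hne, hpos⟩ := hadj j hj
      have hnR : (0:ℝ) < n := by exact_mod_cast hn0
      have hcn : c * n ≤ Q (v j) (v (j+1)) := by
        have := hmin _ _ hne hpos
        rw [le_div_iff₀ hnR] at this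
        linarith
      have hQQ : 2 * α * Q (v j) (v (j+1)) ≤ (Q * Q) (v j) (v (j+1)) :=
        sq_offdiag Q α hnn hdiag hα.le _ _ hne
      have hcc : 2 * (α * (c * n)) ≤ (Q * Q) (v j) (v (j+1)) := by nlinarith
      have hsymm' : (Q * Q) (v (j+1)) (v j) = (Q * Q) (v j) (v (j+1)) := by
        first
        | exact hAsymm.apply _ _
        | exact (hAsymm.apply _ _).symm
      constructor
      · exact mul_le_mul_of_nonneg_right hcc (sq_nonneg _)
      · have hTval : T (v (j+1), v j) = (Q * Q) (v j) (v (j+1)) * (a j - a (j+1))^2 := by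
          have : T (v (j+1), v j) = (Q * Q) (v (j+1)) (v j) * (g (v (j+1)) - g (v j))^2 := rfl
          rw [this, hsymm']
          have hsq : (g (v (j+1)) - g (v j))^2 = (a j - a (j+1))^2 := by
            show _ = (g (v j) - g (v (j+1)))^2
            ring
          rw [hsq]
        rw [hTval]
        exact mul_le_mul_of_nonneg_right hcc (sq_nonneg _)
    -- sum over the image
    have hsum1 : ∑ p ∈ Finset.image e ((range L) ×ˢ (Finset.univ : Finset Bool)), T p
        = ∑ j ∈ range L, (T (v j, v (j+1)) + T (v (j+1), v j)) := by
      rw [Finset.sum_image heinj, Finset.sum_product]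
      apply Finset.sum_congr rfl
      intro j _
      rw [Fintype.sum_bool]
      simp only [he]
      norm_num
    have hsum2 : ∑ p ∈ Finset.image e ((range L) ×ˢ (Finset.univ : Finset Bool)), T p
        ≤ ∑ x, ∑ y, (Q * Q) x y * (g x - g y)^2 := by
      have hprod : ∑ x, ∑ y, (Q * Q) x y * (g x - g y)^2
          = ∑ p ∈ (Finset.univ ×ˢ Finset.univ : Finset (Fin n × Fin n)), T p := by
        rw [Finset.sum_product]
      rw [hprod]
      exact Finset.sum_le_sum_of_subset_of_nonneg (Finset.subset_univ _) (fun p _ _ => hTnn p)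
    have hsum3 : 4 * (α * (c * n)) * D ≤ ∑ j ∈ range L, (T (v j, v (j+1)) + T (v (j+1), v j)) := by
      rw [hD, Finset.mul_sum]
      apply Finset.sum_le_sum
      intro j hj
      rw [Finset.mem_range] at hj
      obtain ⟨h1, h2⟩ := hedge j hj
      linarith
    have : 4 * (α * (c * n)) * D ≤ ∑ x, ∑ y, (Q * Q) x y * (g x - g y)^2 := by
      rw [← hsum1] at hsum3
      linarith
    rw [← hmv] at hid
    nlinarith [this, hid]
  -- combine
  have hacnn : 0 < α * c * n := by positivity
  have hDpos : 0 ≤ (α*c*n)*D := by positivity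
  rcases le_total (2*M^2) (M^2*M^2) with hmax | hmax
  · rw [max_eq_right hmax]
    have e2 : 2*(α*c)^2*(n:ℝ)*(M^2*M^2) ≤ 2*(α*c)^2*n*(4*n*D) :=
      mul_le_mul_of_nonneg_left hF2 (by positivity)
    have e3 : 2*(α*c)^2*(n:ℝ)*(4*n*D) = 2*((4*(α*c)*n)*((α*c*n)*D)) := by ring
    have e4 : (4*(α*c)*(n:ℝ))*((α*c*n)*D) ≤ 1*((α*c*n)*D) :=
      mul_le_mul_of_nonneg_right hacn hDpos
    have : 2*(α*c)^2 * n * (M^2*M^2) ≤ 2 * (α*c*n) * D := by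
      rw [e3] at e2
      nlinarith
    linarith
  · rw [max_eq_left hmax]
    have e2 : 4*(α*c)^2*(n:ℝ)*(M^2) ≤ 4*(α*c)^2*n*(n*D) :=
      mul_le_mul_of_nonneg_left hF1 (by positivity)
    have e3 : 4*(α*c)^2*(n:ℝ)*(n*D) = (4*(α*c)*n)*((α*c*n)*D) := by ring
    have e4 : (4*(α*c)*(n:ℝ))*((α*c*n)*D) ≤ 1*((α*c*n)*D) :=
      mul_le_mul_of_nonneg_right hacn hDpos
    have : 2*(α*c)^2 * n * (2*M^2) ≤ 2 * (α*c*n) * D := by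
      rw [e3] at e2
      nlinarith
    linarith

lemma key_step' (n : ℕ) (α c : ℝ) (hα : 0 < α) (hc : 0 < c)
    (Q : Matrix (Fin n) (Fin n) ℝ)
    (hsymm : Q.IsSymm) (hnn : ∀ x y, 0 ≤ Q x y) (hrow : ∀ x, ∑ y, Q x y = 1)
    (hdiag : ∀ x, α ≤ Q x x)
    (hconn : (SimpleGraph.fromRel fun x y => 0 < Q x y).Connected)
    (hmin : ∀ x y, x ≠ y → 0 < Q x y → c ≤ Q x y / n)
    (hacn : 4 * (α * c) * n ≤ 1)
    (g : Fin n → ℝ) (hmean : ∑ x, g x = 0) (hS : ∑ x, (g x)^2 ≤ n)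
    (M : ℝ) (hM : ∀ x, |g x| ≤ M) (hMx : ∃ x, |g x| = M) :
    ∑ x, (Q.mulVec g x)^2 + 2*(α*c)^2 * n * max (2*M^2) (M^2*M^2) ≤ ∑ x, (g x)^2 := by
  rcases hMx with ⟨x0, hx0⟩
  rcases abs_choice (g x0) with h | h
  · rw [h] at hx0
    exact key_step n α c hα hc Q hsymm hnn hrow hdiag hconn hmin hacn g hmean hS M hM ⟨x0, hx0⟩
  · rw [h] at hx0
    have key := key_step n α c hα hc Q hsymm hnn hrow hdiag hconn hmin hacn (-g)
      (by simp [hmean])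
      (by simpa using hS) M (fun x => by simpa using hM x) ⟨x0, by simpa using hx0⟩
    have e1 : ∑ x, (Q.mulVec (-g) x)^2 = ∑ x, (Q.mulVec g x)^2 := by
      apply Finset.sum_congr rfl
      intro x _
      rw [Matrix.mulVec_neg]
      simp
    have e2 : ∑ x, ((-g) x)^2 = ∑ x, (g x)^2 := by simp
    rw [e1, e2] at key
    exact key

set_option maxHeartbeats 1000000 in
/-- Bound on the `ℓ² → ℓ∞` norm of the time-inhomogeneous evolution: for a sequence of
lazy, symmetric, stochastic, connected transition matrices `Q_i` with self-loop
probability at least `α` and minimal off-diagonal entry `π(x)Q_i(x,y) ≥ c`, and any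
mean-zero `f` with `⟨f, f⟩_π ≤ 1`, the iterated product satisfies
`‖Q_k ⋯ Q_1 f‖_∞ ≤ min{[(2αc)²(k+1)]^{−1/2}, [(αc)²(2k+2)]^{−1/4}}`. -/
theorem stmt_11 (n : ℕ) (hn : 1 ≤ n) (α c : ℝ) (hα : 0 < α) (hc : 0 < c)
    (Q : ℕ → Matrix (Fin n) (Fin n) ℝ)
    (hsymm : ∀ i, (Q i).IsSymm)
    (hnn : ∀ i x y, 0 ≤ Q i x y) (hrow : ∀ i x, ∑ y, Q i x y = 1)
    (hdiag : ∀ i x, α ≤ Q i x x)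
    (hconn : ∀ i, (SimpleGraph.fromRel fun x y => 0 < Q i x y).Connected)
    (hmin : ∀ i x y, x ≠ y → 0 < Q i x y → c ≤ Q i x y / n) :
    ∀ (f : Fin n → ℝ), (∑ x, f x = 0) → ((1 / (n : ℝ)) * ∑ x, (f x) ^ 2 ≤ 1) →
    ∀ g : ℕ → Fin n → ℝ, g 0 = f → (∀ i, g (i + 1) = (Q (i + 1)).mulVec (g i)) →
    ∀ k : ℕ, (⨆ x, |g k x|)
      ≤ min (((2 * α * c) ^ 2 * ((k : ℝ) + 1)) ^ (-(1 / 2) : ℝ))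
            (((α * c) ^ 2 * (2 * (k : ℝ) + 2)) ^ (-(1 / 4) : ℝ)) := by
  intro f hf0 hf2 g hg0 hgrec k
  have hnR : (0:ℝ) < n := by exact_mod_cast hn
  haveI hne : Nonempty (Fin n) := ⟨⟨0, hn⟩⟩
  set M : ℕ → ℝ := fun i => ⨆ x, |g i x| with hMdef
  have hbdd : ∀ i, BddAbove (Set.range fun x => |g i x|) :=
    fun i => Set.Finite.bddAbove (Set.finite_range _)
  have hMub : ∀ i x, |g i x| ≤ M i := fun i x => le_ciSup (hbdd i) x
  have hMattain : ∀ i, ∃ x, |g i x| = M i := by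
    intro i
    obtain ⟨x0, -, hx0⟩ := Finset.exists_max_image Finset.univ (fun x => |g i x|)
      ⟨Classical.arbitrary _, Finset.mem_univ _⟩
    exact ⟨x0, le_antisymm (hMub i x0) (ciSup_le (fun x => hx0 x (Finset.mem_univ x)))⟩
  have hM0 : ∀ i, 0 ≤ M i := fun i => le_trans (abs_nonneg _) (hMub i ⟨0, hn⟩)
  have hmean : ∀ i, ∑ x, g i x = 0 := by
    intro i
    induction i with
    | zero => rw [hg0]; exact hf0
    | succ i ih => rw [hgrec i]; exact mean_preserved _ (hrow _) (hsymm _) _ ih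
  have hSbound : ∀ i, ∑ x, (g i x)^2 ≤ n := by
    intro i
    induction i with
    | zero =>
      rw [hg0]
      rw [one_div, inv_mul_le_iff₀ hnR, mul_one] at hf2
      exact hf2
    | succ i ih =>
      rw [hgrec i]
      exact le_trans (contract_sq _ (hnn _) (hrow _) (hsymm _) _) ih
  have hMmono : ∀ i, M (i+1) ≤ M i := by
    intro i
    apply ciSup_le
    intro x
    rw [hgrec i]
    exact sup_contract _ (hnn _) (hrow _) _ _ (hMub i) x
  have hManti : ∀ i j, i ≤ j → M j ≤ M i := fun i j h =>
    antitone_nat_of_succ_le hMmono h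
  -- trivial case n = 1
  rcases eq_or_lt_of_le hn with hn1 | hn2
  · have hMk0 : M k = 0 := by
      obtain ⟨x, hx⟩ := hMattain k
      rw [← hx]
      have hx0 : x = ⟨0, hn⟩ := by
        apply Fin.ext
        omega
      have := hmean k
      have huniv : (Finset.univ : Finset (Fin n)) = {⟨0, hn⟩} := by
        apply Finset.eq_singleton_iff_unique_mem.mpr
        refine ⟨Finset.mem_univ _, fun y _ => ?_⟩
        apply Fin.ext
        omega
      rw [huniv, Finset.sum_singleton] at this
      rw [hx0, this, abs_zero]
    rw [show (⨆ x, |g k x|) = M k from rfl, hMk0]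
    apply le_min
    · exact Real.rpow_nonneg (by positivity) _
    · exact Real.rpow_nonneg (by positivity) _
  -- main case n ≥ 2
  have hacn : 4 * (α * c) * n ≤ 1 := by
    obtain ⟨w⟩ := (hconn 0).preconnected ⟨0, by omega⟩ ⟨1, by omega⟩
    have hlen : 0 < w.length := by
      by_contra h
      push_neg at h
      have h0 : w.length = 0 := by omega
      have e1 := w.getVert_zero
      have e2 := w.getVert_of_length_le (le_of_eq h0)
      rw [e1] at e2
      have : (0 : ℕ) = 1 := by
        have := congrArg Fin.val e2
        simpa using this
      omega
    have hadj := w.adj_getVert_succ hlen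
    rw [SimpleGraph.fromRel_adj] at hadj
    obtain ⟨hne', hor⟩ := hadj
    set u := w.getVert 0 with hu
    set v1 := w.getVert 1 with hv1
    -- get ordered pair with positive entry
    have hpair : ∃ x y : Fin n, x ≠ y ∧ 0 < Q 0 x y := by
      rcases hor with h | h
      · exact ⟨u, v1, hne', h⟩
      · exact ⟨v1, u, hne'.symm, h⟩
    obtain ⟨x, y, hxy, hpos⟩ := hpair
    have hcn : c * n ≤ Q 0 x y := by
      have := hmin 0 x y hxy hpos
      rw [le_div_iff₀ hnR] at this
      linarith
    have hsumle : Q 0 x x + Q 0 x y ≤ 1 := by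
      have hsub : ({x, y} : Finset (Fin n)) ⊆ Finset.univ := Finset.subset_univ _
      have h1 : ∑ z ∈ ({x, y} : Finset (Fin n)), Q 0 x z ≤ ∑ z, Q 0 x z :=
        Finset.sum_le_sum_of_subset_of_nonneg hsub (fun z _ _ => hnn 0 x z)
      rw [Finset.sum_pair hxy, hrow 0 x] at h1
      exact h1
    have hαQ : α ≤ Q 0 x x := hdiag 0 x
    have h1 : α + c * n ≤ 1 := by linarith
    nlinarith [sq_nonneg (2*α - 1), mul_pos hc hnR, hα]
  -- telescoping
  set K : ℝ := 2*(α*c)^2 * n * max (2*(M k)^2) ((M k)^2*(M k)^2) with hK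
  have htel : ∀ i ∈ range (k+1),
      K ≤ ∑ x, (g i x)^2 - ∑ x, (g (i+1) x)^2 := by
    intro i hi
    rw [Finset.mem_range] at hi
    have step := key_step' n α c hα hc (Q (i+1)) (hsymm _) (hnn _) (hrow _) (hdiag _)
      (hconn _) (hmin _) hacn (g i) (hmean i) (hSbound i) (M i) (hMub i) (hMattain i)
    rw [← hgrec i] at step
    have hki : M k ≤ M i := hManti i k (by omega)
    have hsq : (M k)^2 ≤ (M i)^2 := by nlinarith [hM0 k]
    have hmax : max (2*(M k)^2) ((M k)^2*(M k)^2) ≤ max (2*(M i)^2) ((M i)^2*(M i)^2) := by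
      apply max_le_max
      · linarith
      · exact mul_le_mul hsq hsq (by positivity) (by positivity)
    have hmono := mul_le_mul_of_nonneg_left hmax (show (0:ℝ) ≤ 2*(α*c)^2*n by positivity)
    rw [hK]
    linarith
  have hsum : (k+1 : ℝ) * K ≤ n := by
    have h1 := Finset.sum_le_sum htel
    rw [Finset.sum_const, Finset.card_range, nsmul_eq_mul] at h1
    have h2 : ∑ i ∈ range (k+1), (∑ x, (g i x)^2 - ∑ x, (g (i+1) x)^2)
        = ∑ x, (g 0 x)^2 - ∑ x, (g (k+1) x)^2 :=
      Finset.sum_range_sub' (fun i => ∑ x, (g i x)^2) (k+1)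
    have h3 : (0:ℝ) ≤ ∑ x, (g (k+1) x)^2 := Finset.sum_nonneg (fun x _ => sq_nonneg _)
    have h4 := hSbound 0
    push_cast at h1 ⊢
    linarith
  -- extract the two inequalities
  have hKmax1 : (k+1:ℝ) * (2*(α*c)^2 * n * (2*(M k)^2)) ≤ n := by
    refine le_trans ?_ hsum
    apply mul_le_mul_of_nonneg_left _ (by positivity)
    rw [hK]
    apply mul_le_mul_of_nonneg_left (le_max_left _ _) (by positivity)
  have hKmax2 : (k+1:ℝ) * (2*(α*c)^2 * n * ((M k)^2*(M k)^2)) ≤ n := by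
    refine le_trans ?_ hsum
    apply mul_le_mul_of_nonneg_left _ (by positivity)
    rw [hK]
    apply mul_le_mul_of_nonneg_left (le_max_right _ _) (by positivity)
  have hI1 : (2*α*c)^2 * ((k:ℝ)+1) * (M k)^2 ≤ 1 := by
    have h1 : ((2*α*c)^2 * ((k:ℝ)+1) * (M k)^2) * n = ((k:ℝ)+1) * (2*(α*c)^2 * n * (2*(M k)^2)) := by
      ring
    have h2 : ((2*α*c)^2 * ((k:ℝ)+1) * (M k)^2) * n ≤ 1 * n := by
      rw [h1, one_mul]; exact_mod_cast hKmax1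
    exact le_of_mul_le_mul_right h2 hnR
  have hI2 : (α*c)^2 * (2*(k:ℝ)+2) * ((M k)^2 * (M k)^2) ≤ 1 := by
    have h1 : ((α*c)^2 * (2*(k:ℝ)+2) * ((M k)^2*(M k)^2)) * n
        = ((k:ℝ)+1) * (2*(α*c)^2 * n * ((M k)^2*(M k)^2)) := by
      ring
    have h2 : ((α*c)^2 * (2*(k:ℝ)+2) * ((M k)^2*(M k)^2)) * n ≤ 1 * n := by
      rw [h1, one_mul]; exact_mod_cast hKmax2
    exact le_of_mul_le_mul_right h2 hnR
  -- final rpow computations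
  have hMk := hM0 k
  apply le_min
  · -- square root bound
    set X : ℝ := (2*α*c)^2 * ((k:ℝ)+1) with hX
    have hXpos : 0 < X := by positivity
    have hMX : (M k)^2 ≤ 1 / X := by
      rw [le_div_iff₀ hXpos]
      calc (M k)^2 * X = X * (M k)^2 := by ring
        _ ≤ 1 := hI1
    have hMeq : ((M k)^2 : ℝ) ^ ((1:ℝ)/2) = M k := by
      rw [← Real.rpow_natCast (M k) 2, ← Real.rpow_mul hMk]
      norm_num
    calc M k = ((M k)^2 : ℝ) ^ ((1:ℝ)/2) := hMeq.symm
      _ ≤ (1/X) ^ ((1:ℝ)/2) := Real.rpow_le_rpow (by positivity) hMX (by norm_num)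
      _ = X ^ (-(1/2) : ℝ) := by
          rw [one_div X, Real.inv_rpow hXpos.le, ← Real.rpow_neg hXpos.le]
  · set Y : ℝ := (α*c)^2 * (2*(k:ℝ)+2) with hY
    have hYpos : 0 < Y := by positivity
    have hMY : (M k)^4 ≤ 1 / Y := by
      rw [le_div_iff₀ hYpos]
      calc (M k)^4 * Y = Y * ((M k)^2 * (M k)^2) := by ring
        _ ≤ 1 := hI2
    have hMeq : ((M k)^4 : ℝ) ^ ((1:ℝ)/4) = M k := by
      rw [← Real.rpow_natCast (M k) 4, ← Real.rpow_mul hMk]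
      norm_num
    calc M k = ((M k)^4 : ℝ) ^ ((1:ℝ)/4) := hMeq.symm
      _ ≤ (1/Y) ^ ((1:ℝ)/4) := Real.rpow_le_rpow (by positivity) hMY (by norm_num)
      _ = Y ^ (-(1/4) : ℝ) := by
          rw [one_div Y, Real.inv_rpow hYpos.le, ← Real.rpow_neg hYpos.le]
end

section
/- Let n ≥ 1, let α > 0 and c > 0, and let Q be an n×n real symmetric stochastic matrix satisfying: (i) Q(x,x) ≥ α for every x; (ii) the graph on the index set with an edge between x ≠ y whenever Q(x,y) > 0 is connected; (iii) c ≤ Q(x,y)/n for every x ≠ y with Q(x,y) > 0. Then for every index x and every integer k ≥ 1, |n·(Q^k)(x,x) − 1| ≤ min{ 1/(αc·√(k+1)), 1/(2α²c²(k+1)) }, where Q^k denotes the k-th matrix power and (Q^k)(x,x) its diagonal entry at x. -/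
/-!
Write `‖g‖² = g ⬝ᵥ g` and `E(g) = ‖g‖² - ‖Qg‖²`. Because `Q` is symmetric and doubly stochastic,
`2 E(g) = ∑ x y, Q²(x, y) (g x - g y)²`, and laziness gives `Q²(x, y) ≥ 2αε` across every edge,
so `E(g)` controls `2αε` times the sum of squared increments of `g` along any path.

If `g` has mean zero and `M` is stochastic, `(Mg)(z)` lies between `min g ≤ 0` and `max g ≥ 0`.
Joining a maximiser to a minimiser by a path and applying Cauchy–Schwarz along it, to `g` and to
`t ↦ t |t|`, bounds `(Mg)(z)²` by `n E(g)` and `(Mg)(z)⁴` by `E(g) ‖g‖²`, up to constants. Applied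
to `Q^j g` for `j ≤ k`, and since `∑ j, E(Q^j g) ≤ ‖g‖²` telescopes, this bounds `Q^k` from `ℓ²` to
`ℓ∞` on mean-zero functions.

For `f = n δ_x - 1`, `n Q^{a+b}(x, x) - 1 = (Q^a Q^b f)(x)` and `‖Q^b f‖² = n (Q^b Q^b f)(x)`, so
the same bound for `Q^b` controls `‖Q^b f‖`. Composing with the bound for `Q^a`, where `a + b = k`
is split evenly, gives the estimate.
-/

open Finset Matrix SimpleGraph Fintype

theorem abs_mul_abs_self_sub_le (x y : ℝ) : abs (x * |x| - y * |y|) ≤ |x - y| * (|x| + |y|) := by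
  calc abs (x * |x| - y * |y|) = abs ((x - y) * |x| + y * (|x| - |y|)) := by congr 1; ring
    _ ≤ |x - y| * |x| + |y| * abs (|x| - |y|) := by
        simpa only [abs_mul, abs_abs] using abs_add_le ((x - y) * |x|) (y * (|x| - |y|))
    _ ≤ |x - y| * |x| + |y| * |x - y| := by
        gcongr _ + |y| * ?_; exact abs_abs_sub_abs_le_abs_sub x y
    _ = |x - y| * (|x| + |y|) := by ring

theorem exists_eq_add_and_sq_le_four_mul (k : ℕ) :
    ∃ a b : ℕ, k = a + b ∧ ((k : ℝ) + 1) ^ 2 ≤ 4 * (a + 1) * (b + 1) := by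
  obtain ⟨m, rfl | rfl⟩ := Nat.even_or_odd' k
  · exact ⟨m, m, by ring, by push_cast; nlinarith⟩
  · exact ⟨m + 1, m, by ring, by push_cast; nlinarith⟩

namespace SimpleGraph.Walk

variable {V : Type*} {G : SimpleGraph V} {u v : V}

def energy (p : G.Walk u v) (g : V → ℝ) : ℝ :=
  ∑ i ∈ range p.length, (g (p.getVert i) - g (p.getVert (i + 1))) ^ 2

theorem energy_nonneg (p : G.Walk u v) (g : V → ℝ) : 0 ≤ p.energy g :=
  sum_nonneg fun _ _ => sq_nonneg _

theorem sum_getVert_sub (p : G.Walk u v) (φ : V → ℝ) :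
    ∑ i ∈ range p.length, (φ (p.getVert i) - φ (p.getVert (i + 1))) = φ u - φ v := by
  rw [sum_range_sub' (fun i => φ (p.getVert i)), getVert_zero, getVert_length]

theorem sq_sub_le_length_mul_energy (p : G.Walk u v) (g : V → ℝ) :
    (g u - g v) ^ 2 ≤ p.length * p.energy g := by
  have h := sq_sum_le_card_mul_sum_sq (s := range p.length)
    (f := fun i => g (p.getVert i) - g (p.getVert (i + 1)))
  rwa [p.sum_getVert_sub g, card_range] at h

variable [Fintype V] {p : G.Walk u v}

theorem IsPath.sum_getVert_le (hp : p.IsPath) {f : V → ℝ} (hf : ∀ x, 0 ≤ f x) :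
    ∑ i ∈ range (p.length + 1), f (p.getVert i) ≤ ∑ x, f x := by
  classical
  rw [← sum_image fun i hi j hj hij => hp.getVert_injOn
    (Nat.lt_succ_iff.1 (mem_range.1 hi)) (Nat.lt_succ_iff.1 (mem_range.1 hj)) hij]
  exact sum_le_univ_sum_of_nonneg hf

theorem IsPath.sum_add_swap_le (hp : p.IsPath) {F : V → V → ℝ} (hF : ∀ x y, 0 ≤ F x y) :
    ∑ i ∈ range p.length,
        (F (p.getVert i) (p.getVert (i + 1)) + F (p.getVert (i + 1)) (p.getVert i)) ≤
      ∑ x, ∑ y, F x y := by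
  classical
  have inj {i j : ℕ} (hi : i ≤ p.length) (hj : j ≤ p.length) (h : p.getVert i = p.getVert j) :
      i = j := hp.getVert_injOn hi hj h
  set step : ℕ → V × V := fun i => (p.getVert i, p.getVert (i + 1))
  set back : ℕ → V × V := fun i => (p.getVert (i + 1), p.getVert i)
  have hdisj : Disjoint ((range p.length).image step) ((range p.length).image back) := by
    rw [Finset.disjoint_left]
    rintro _ hq hq'
    obtain ⟨i, hi, rfl⟩ := mem_image.1 hq
    obtain ⟨j, hj, h⟩ := mem_image.1 hq'
    rw [mem_range] at hi hj
    simp only [step, back, Prod.mk.injEq] at h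
    have := inj (by omega) (by omega) h.1
    have := inj (by omega) (by omega) h.2
    omega
  rw [sum_add_distrib,
    ← sum_image (f := fun q => F q.1 q.2) (s := range p.length) (g := step) fun i hi j hj h =>
      inj (mem_range.1 hi).le (mem_range.1 hj).le (congrArg Prod.fst h),
    ← sum_image (f := fun q => F q.1 q.2) (s := range p.length) (g := back) fun i hi j hj h =>
      inj (mem_range.1 hi).le (mem_range.1 hj).le (congrArg Prod.snd h),
    ← sum_union hdisj, ← Fintype.sum_prod_type']
  exact sum_le_univ_sum_of_nonneg fun q => hF q.1 q.2

theorem IsPath.sq_mul_abs_sub_le (hp : p.IsPath) (g : V → ℝ) :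
    (g u * |g u| - g v * |g v|) ^ 2 ≤ 4 * p.energy g * ∑ x, g x ^ 2 := by
  set a : ℕ → ℝ := fun i => g (p.getVert i)
  have htel := p.sum_getVert_sub fun x => g x * |g x|
  have hsq : ∑ i ∈ range p.length, (|a i| + |a (i + 1)|) ^ 2 ≤ 4 * ∑ x, g x ^ 2 := by
    have h₀ := hp.sum_getVert_le fun x => sq_nonneg (g x)
    have h₁ : ∑ i ∈ range p.length, a i ^ 2 ≤ ∑ i ∈ range (p.length + 1), a i ^ 2 :=
      sum_le_sum_of_subset_of_nonneg (range_subset_range.2 p.length.le_succ)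
        fun _ _ _ => sq_nonneg _
    have h₂ : ∑ i ∈ range p.length, a (i + 1) ^ 2 ≤ ∑ i ∈ range (p.length + 1), a i ^ 2 := by
      rw [sum_range_succ' (fun i => a i ^ 2)]; linarith [sq_nonneg (a 0)]
    have h₃ : ∑ i ∈ range p.length, (|a i| + |a (i + 1)|) ^ 2 ≤
        ∑ i ∈ range p.length, (2 * a i ^ 2 + 2 * a (i + 1) ^ 2) :=
      sum_le_sum fun i _ => by
        nlinarith [sq_abs (a i), sq_abs (a (i + 1)), sq_nonneg (|a i| - |a (i + 1)|)]
    rw [sum_add_distrib, ← mul_sum, ← mul_sum] at h₃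
    linarith
  calc (g u * |g u| - g v * |g v|) ^ 2
      ≤ (∑ i ∈ range p.length, |a i - a (i + 1)| * (|a i| + |a (i + 1)|)) ^ 2 := by
        rw [← htel, ← sq_abs]
        gcongr
        exact (abs_sum_le_sum_abs _ _).trans (sum_le_sum fun i _ => abs_mul_abs_self_sub_le _ _)
    _ ≤ p.energy g * ∑ i ∈ range p.length, (|a i| + |a (i + 1)|) ^ 2 := by
        simpa only [sq_abs, energy] using sum_mul_sq_le_sq_mul_sq (range p.length)
          (fun i => |a i - a (i + 1)|) fun i => |a i| + |a (i + 1)|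
    _ ≤ 4 * p.energy g * ∑ x, g x ^ 2 := by
        nlinarith [p.energy_nonneg g]

end SimpleGraph.Walk

namespace Matrix

def transitionGraph {ι : Type*} (Q : Matrix ι ι ℝ) : SimpleGraph ι :=
  SimpleGraph.fromRel fun x y => 0 < Q x y

variable {ι : Type*} [Fintype ι]

theorem dotProduct_self_nonneg (g : ι → ℝ) : 0 ≤ g ⬝ᵥ g := by
  simpa using dotProduct_self_star_nonneg g

theorem IsSymm.dotProduct_mul_self_mulVec {Q : Matrix ι ι ℝ} (hQ : Q.IsSymm) (g : ι → ℝ) :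
    g ⬝ᵥ (Q * Q) *ᵥ g = Q *ᵥ g ⬝ᵥ Q *ᵥ g := by
  rw [← mulVec_mulVec, dotProduct_mulVec, ← mulVec_transpose, hQ.eq]

variable [DecidableEq ι]

theorem sum_sum_mul_sub_sq_of_mem_doublyStochastic {R : Matrix ι ι ℝ}
    (hR : R ∈ doublyStochastic ℝ ι) (g : ι → ℝ) :
    ∑ x, ∑ y, R x y * (g x - g y) ^ 2 = 2 * (g ⬝ᵥ g - g ⬝ᵥ R *ᵥ g) := by
  have hrow : ∑ x, ∑ y, R x y * g x ^ 2 = g ⬝ᵥ g := by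
    simp [← sum_mul, sum_row_of_mem_doublyStochastic hR, dotProduct, sq]
  have hcol : ∑ x, ∑ y, R x y * g y ^ 2 = g ⬝ᵥ g := by
    rw [sum_comm]
    simp [← sum_mul, sum_col_of_mem_doublyStochastic hR, dotProduct, sq]
  have hcross : ∑ x, ∑ y, R x y * (g x * g y) = g ⬝ᵥ R *ᵥ g := by
    simp only [dotProduct, mulVec, mul_sum]
    exact sum_congr rfl fun _ _ => sum_congr rfl fun _ _ => by ring
  calc ∑ x, ∑ y, R x y * (g x - g y) ^ 2
      = ∑ x, ∑ y, R x y * g x ^ 2 + ∑ x, ∑ y, R x y * g y ^ 2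
          - 2 * ∑ x, ∑ y, R x y * (g x * g y) := by
        simp only [mul_sum, ← sum_add_distrib, ← sum_sub_distrib]
        exact sum_congr rfl fun _ _ => sum_congr rfl fun _ _ => by ring
    _ = 2 * (g ⬝ᵥ g - g ⬝ᵥ R *ᵥ g) := by rw [hrow, hcol, hcross]; ring

theorem two_mul_sub_dotProduct_mulVec_eq {Q : Matrix ι ι ℝ} (hQ : Q ∈ doublyStochastic ℝ ι)
    (hsymm : Q.IsSymm) (g : ι → ℝ) :
    2 * (g ⬝ᵥ g - Q *ᵥ g ⬝ᵥ Q *ᵥ g) = ∑ x, ∑ y, (Q * Q) x y * (g x - g y) ^ 2 := by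
  rw [sum_sum_mul_sub_sq_of_mem_doublyStochastic (mul_mem hQ hQ), hsymm.dotProduct_mul_self_mulVec]

theorem mulVec_dotProduct_mulVec_le {Q : Matrix ι ι ℝ} (hQ : Q ∈ doublyStochastic ℝ ι)
    (hsymm : Q.IsSymm) (g : ι → ℝ) : Q *ᵥ g ⬝ᵥ Q *ᵥ g ≤ g ⬝ᵥ g := by
  have h := two_mul_sub_dotProduct_mulVec_eq hQ hsymm g
  have : 0 ≤ ∑ x, ∑ y, (Q * Q) x y * (g x - g y) ^ 2 := sum_nonneg fun _ _ => sum_nonneg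
    fun _ _ => mul_nonneg (nonneg_of_mem_doublyStochastic (mul_mem hQ hQ)) (sq_nonneg _)
  linarith

theorem pow_mulVec_dotProduct_pow_mulVec_le {Q : Matrix ι ι ℝ} (hQ : Q ∈ doublyStochastic ℝ ι)
    (hsymm : Q.IsSymm) (g : ι → ℝ) (k : ℕ) : Q ^ k *ᵥ g ⬝ᵥ Q ^ k *ᵥ g ≤ g ⬝ᵥ g := by
  induction k with
  | zero => simp
  | succ k ih =>
    rw [pow_succ', ← mulVec_mulVec]
    exact (mulVec_dotProduct_mulVec_le hQ hsymm _).trans ih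

theorem sum_range_sub_dotProduct_pow_mulVec (Q : Matrix ι ι ℝ) (g : ι → ℝ) (k : ℕ) :
    ∑ j ∈ range k, (Q ^ j *ᵥ g ⬝ᵥ Q ^ j *ᵥ g - Q *ᵥ (Q ^ j *ᵥ g) ⬝ᵥ Q *ᵥ (Q ^ j *ᵥ g)) =
      g ⬝ᵥ g - Q ^ k *ᵥ g ⬝ᵥ Q ^ k *ᵥ g := by
  simp only [mulVec_mulVec, ← pow_succ']
  simpa using sum_range_sub' (fun j => Q ^ j *ᵥ g ⬝ᵥ Q ^ j *ᵥ g) k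

theorem pow_sub_mulVec_pow_mulVec (Q : Matrix ι ι ℝ) {j k : ℕ} (hjk : j ≤ k) (g : ι → ℝ) :
    Q ^ (k - j) *ᵥ (Q ^ j *ᵥ g) = Q ^ k *ᵥ g := by
  rw [mulVec_mulVec, ← pow_add, Nat.sub_add_cancel hjk]

theorem exists_mulVec_apply_mem_Icc {M : Matrix ι ι ℝ} (hM : M ∈ rowStochastic ℝ ι)
    {g : ι → ℝ} (hg : ∑ x, g x = 0) (z : ι) :
    ∃ w y, g y ≤ 0 ∧ 0 ≤ g w ∧ g y ≤ (M *ᵥ g) z ∧ (M *ᵥ g) z ≤ g w := by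
  have hne : (univ : Finset ι).Nonempty := ⟨z, mem_univ z⟩
  obtain ⟨w, -, hw⟩ := exists_max_image univ g hne
  obtain ⟨y, -, hy⟩ := exists_min_image univ g hne
  obtain ⟨w', -, hw'⟩ := exists_le_of_sum_le hne (f := 0) (g := g) (by simp [hg])
  obtain ⟨y', -, hy'⟩ := exists_le_of_sum_le hne (f := g) (g := 0) (by simp [hg])
  have hsum : ∑ t, M z t = 1 := sum_row_of_mem_rowStochastic hM z
  have hnn (t) : 0 ≤ M z t := nonneg_of_mem_rowStochastic hM
  refine ⟨w, y, (hy y' (mem_univ _)).trans hy', hw'.trans (hw w' (mem_univ _)), ?_, ?_⟩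
  · calc g y = ∑ t, M z t * g y := by rw [← sum_mul, hsum, one_mul]
      _ ≤ (M *ᵥ g) z := sum_le_sum fun t _ => mul_le_mul_of_nonneg_left (hy t (mem_univ t)) (hnn t)
  · calc (M *ᵥ g) z ≤ ∑ t, M z t * g w :=
          sum_le_sum fun t _ => mul_le_mul_of_nonneg_left (hw t (mem_univ t)) (hnn t)
      _ = g w := by rw [← sum_mul, hsum, one_mul]

theorem sq_card_mul_mul_apply_self_sub_one_le {M N : Matrix ι ι ℝ} (hM : M ∈ rowStochastic ℝ ι)
    (hN : N ∈ doublyStochastic ℝ ι) (hNsymm : N.IsSymm) (x : ι) {A B : ℝ} (hA : 0 ≤ A)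
    (hB : 0 ≤ B) (hMx : ∀ g : ι → ℝ, ∑ y, g y = 0 → ((M *ᵥ g) x) ^ 2 ≤ A * (g ⬝ᵥ g))
    (hNx : ∀ g : ι → ℝ, ∑ y, g y = 0 → ((N *ᵥ g) x) ^ 2 ≤ B * (g ⬝ᵥ g)) :
    (card ι * (M * N) x x - 1) ^ 2 ≤ card ι ^ 2 * A * B := by
  have : Nonempty ι := ⟨x⟩
  have hn : (0 : ℝ) < card ι := by positivity
  set n : ℝ := card ι
  set f : ι → ℝ := n • Pi.single x 1 - 1
  have hf (w : ι → ℝ) : f ⬝ᵥ w = n * w x - ∑ y, w y := by simp [f, sub_dotProduct, one_dotProduct]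
  have hfsum : ∑ y, f y = 0 := by rw [← dotProduct_one, hf]; simp [n]
  set h := N *ᵥ f
  have hhsum : ∑ y, h y = 0 := (sum_mulVec_of_mem_doublyStochastic hN).trans hfsum
  set u := (N *ᵥ h) x
  have hnorm : h ⬝ᵥ h = n * u := by
    rw [show h ⬝ᵥ h = f ⬝ᵥ N *ᵥ h by
          rw [dotProduct_mulVec, ← mulVec_transpose, hNsymm.eq, dotProduct_comm],
      hf, sum_mulVec_of_mem_doublyStochastic hN, hhsum, sub_zero]
  have hMN : M * N ∈ rowStochastic ℝ ι :=
    mul_mem hM (mem_doublyStochastic_iff_mem_rowStochastic_and_mem_colStochastic.1 hN).1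
  have hD : (M *ᵥ h) x = n * (M * N) x x - 1 := by
    rw [mulVec_mulVec, mulVec, dotProduct_comm, hf, sum_row_of_mem_rowStochastic hMN]
  have hu : n * u ≤ n ^ 2 * B := by
    have hu₀ : 0 ≤ u := nonneg_of_mul_nonneg_right (hnorm ▸ dotProduct_self_nonneg h) hn
    have hu₂ : u ^ 2 ≤ B * (n * u) := hnorm ▸ hNx h hhsum
    rcases hu₀.eq_or_lt with hu | hu
    · rw [← hu, mul_zero]; positivity
    · nlinarith
  calc (n * (M * N) x x - 1) ^ 2 = ((M *ᵥ h) x) ^ 2 := by rw [hD]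
    _ ≤ A * (n * u) := hnorm ▸ hMx h hhsum
    _ ≤ A * (n ^ 2 * B) := by gcongr
    _ = n ^ 2 * A * B := by ring

-- `ε` stands for the paper's `c` times `card ι`: with uniform `π`, `π(x) Q(x, y) = Q(x, y) / card ι`.
structure IsLazyWalk (Q : Matrix ι ι ℝ) (α ε : ℝ) : Prop where
  isSymm : Q.IsSymm
  mem_doublyStochastic : Q ∈ doublyStochastic ℝ ι
  le_apply_self : ∀ x, α ≤ Q x x
  le_apply_of_pos : ∀ x y, x ≠ y → 0 < Q x y → ε ≤ Q x y

namespace IsLazyWalk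

variable {Q : Matrix ι ι ℝ} {α ε : ℝ} {x y : ι}

theorem nonneg (hQ : Q.IsLazyWalk α ε) (x y : ι) : 0 ≤ Q x y :=
  nonneg_of_mem_doublyStochastic hQ.mem_doublyStochastic

theorem pow_mem_rowStochastic (hQ : Q.IsLazyWalk α ε) (k : ℕ) : Q ^ k ∈ rowStochastic ℝ ι :=
  (mem_doublyStochastic_iff_mem_rowStochastic_and_mem_colStochastic.1
    (pow_mem hQ.mem_doublyStochastic k)).1

theorem sum_pow_mulVec (hQ : Q.IsLazyWalk α ε) (k : ℕ) (g : ι → ℝ) :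
    ∑ x, (Q ^ k *ᵥ g) x = ∑ x, g x :=
  sum_mulVec_of_mem_doublyStochastic (pow_mem hQ.mem_doublyStochastic k)

theorem sub_dotProduct_mulVec_nonneg (hQ : Q.IsLazyWalk α ε) (g : ι → ℝ) :
    0 ≤ g ⬝ᵥ g - Q *ᵥ g ⬝ᵥ Q *ᵥ g :=
  sub_nonneg.2 (mulVec_dotProduct_mulVec_le hQ.mem_doublyStochastic hQ.isSymm g)

theorem le_apply_of_adj (hQ : Q.IsLazyWalk α ε) (h : Q.transitionGraph.Adj x y) :
    ε ≤ Q x y := by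
  obtain ⟨hxy, hpos | hpos⟩ := (fromRel_adj _ x y).1 h
  · exact hQ.le_apply_of_pos x y hxy hpos
  · exact hQ.le_apply_of_pos x y hxy (by rwa [← hQ.isSymm.apply x y])

theorem add_le_one (hQ : Q.IsLazyWalk α ε) (h : Q.transitionGraph.Adj x y) : α + ε ≤ 1 := by
  have := add_le_sum (fun t _ => hQ.nonneg x t) (mem_univ x) (mem_univ y) h.ne
  rw [sum_row_of_mem_doublyStochastic hQ.mem_doublyStochastic] at this
  linarith [hQ.le_apply_self x, hQ.le_apply_of_adj h]

theorem four_mul_mul_le_one (hQ : Q.IsLazyWalk α ε) (hα : 0 ≤ α) (hε : 0 ≤ ε)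
    (hconn : Q.transitionGraph.Connected) {u v : ι} (huv : u ≠ v) : 4 * (α * ε) ≤ 1 := by
  obtain ⟨p⟩ := hconn u v
  have hlen : 0 < p.length := Nat.pos_of_ne_zero (mt Walk.eq_of_length_eq_zero huv)
  have := hQ.add_le_one (p.adj_getVert_succ hlen)
  nlinarith [sq_nonneg (α - ε)]

theorem two_mul_mul_le_mul_self_apply (hQ : Q.IsLazyWalk α ε) (hα : 0 ≤ α)
    (h : Q.transitionGraph.Adj x y) : 2 * α * ε ≤ (Q * Q) x y := by
  have hε := hQ.le_apply_of_adj h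
  have hsum := add_le_sum (fun t _ => mul_nonneg (hQ.nonneg x t) (hQ.nonneg t y))
    (mem_univ x) (mem_univ y) h.ne
  rw [← mul_apply] at hsum
  nlinarith [hQ.le_apply_self x, hQ.le_apply_self y, hQ.nonneg x y]

theorem two_mul_mul_energy_le (hQ : Q.IsLazyWalk α ε) (hα : 0 ≤ α) {u v : ι}
    {p : Q.transitionGraph.Walk u v} (hp : p.IsPath) (g : ι → ℝ) :
    2 * α * ε * p.energy g ≤ g ⬝ᵥ g - Q *ᵥ g ⬝ᵥ Q *ᵥ g := by
  set F : ι → ι → ℝ := fun x y => (Q * Q) x y * (g x - g y) ^ 2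
  have hedge {x y : ι} (h : Q.transitionGraph.Adj x y) : 2 * α * ε * (g x - g y) ^ 2 ≤ F x y :=
    mul_le_mul_of_nonneg_right (hQ.two_mul_mul_le_mul_self_apply hα h) (sq_nonneg _)
  have hupper := hp.sum_add_swap_le (F := F) fun x y => mul_nonneg
    (nonneg_of_mem_doublyStochastic (mul_mem hQ.mem_doublyStochastic hQ.mem_doublyStochastic))
    (sq_nonneg _)
  rw [← two_mul_sub_dotProduct_mulVec_eq hQ.mem_doublyStochastic hQ.isSymm] at hupper
  have hlower : 2 * (2 * α * ε * p.energy g) ≤ ∑ i ∈ range p.length,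
      (F (p.getVert i) (p.getVert (i + 1)) + F (p.getVert (i + 1)) (p.getVert i)) := by
    rw [Walk.energy, mul_sum, mul_sum]
    refine sum_le_sum fun i hi => ?_
    have hadj := p.adj_getVert_succ (mem_range.1 hi)
    have h₁ := hedge hadj
    have h₂ := hedge hadj.symm
    rw [sub_sq_comm] at h₂
    linarith
  linarith

theorem sq_sub_le (hQ : Q.IsLazyWalk α ε) (hα : 0 ≤ α) (hε : 0 ≤ ε)
    (hconn : Q.transitionGraph.Connected) (g : ι → ℝ) (u v : ι) :
    4 * α ^ 2 * ε ^ 2 * (g u - g v) ^ 2 ≤ card ι * (g ⬝ᵥ g - Q *ᵥ g ⬝ᵥ Q *ᵥ g) := by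
  have hE := hQ.sub_dotProduct_mulVec_nonneg g
  rcases eq_or_ne u v with rfl | huv
  · rw [sub_self, zero_pow two_ne_zero, mul_zero]
    exact mul_nonneg (Nat.cast_nonneg _) hE
  have h4 := hQ.four_mul_mul_le_one hα hε hconn huv
  obtain ⟨p, hp⟩ := (hconn u v).exists_isPath
  have hlen : (p.length : ℝ) + 1 ≤ card ι := by exact_mod_cast hp.length_lt
  have hosc := p.sq_sub_le_length_mul_energy g
  have hS := hQ.two_mul_mul_energy_le hα hp g
  calc 4 * α ^ 2 * ε ^ 2 * (g u - g v) ^ 2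
      ≤ 2 * (α * ε) * p.length * (2 * α * ε * p.energy g) := by
        have := mul_le_mul_of_nonneg_left hosc (by positivity : (0 : ℝ) ≤ 4 * α ^ 2 * ε ^ 2)
        linarith
    _ ≤ 2 * (α * ε) * p.length * (g ⬝ᵥ g - Q *ᵥ g ⬝ᵥ Q *ᵥ g) := by
        gcongr
    _ ≤ card ι * (g ⬝ᵥ g - Q *ᵥ g ⬝ᵥ Q *ᵥ g) := by
        gcongr
        nlinarith [mul_nonneg hα hε]

theorem sq_mul_abs_sub_le (hQ : Q.IsLazyWalk α ε) (hα : 0 ≤ α) (hε : 0 ≤ ε)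
    (hconn : Q.transitionGraph.Connected) (g : ι → ℝ) (u v : ι) :
    2 * α ^ 2 * ε ^ 2 * (g u * |g u| - g v * |g v|) ^ 2 ≤
      (g ⬝ᵥ g - Q *ᵥ g ⬝ᵥ Q *ᵥ g) * (g ⬝ᵥ g) := by
  have hE := hQ.sub_dotProduct_mulVec_nonneg g
  have hnorm : g ⬝ᵥ g = ∑ x, g x ^ 2 := by simp only [dotProduct, sq]
  have hN := dotProduct_self_nonneg g
  rcases eq_or_ne u v with rfl | huv
  · simpa using mul_nonneg hE hN
  have h4 := hQ.four_mul_mul_le_one hα hε hconn huv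
  obtain ⟨p, hp⟩ := (hconn u v).exists_isPath
  have hnash := hp.sq_mul_abs_sub_le g
  have hS := hQ.two_mul_mul_energy_le hα hp g
  rw [← hnorm] at hnash
  calc 2 * α ^ 2 * ε ^ 2 * (g u * |g u| - g v * |g v|) ^ 2
      ≤ 4 * (α * ε) * (2 * α * ε * p.energy g) * (g ⬝ᵥ g) := by
        have := mul_le_mul_of_nonneg_left hnash (by positivity : (0 : ℝ) ≤ 2 * α ^ 2 * ε ^ 2)
        linarith
    _ ≤ 4 * (α * ε) * (g ⬝ᵥ g - Q *ᵥ g ⬝ᵥ Q *ᵥ g) * (g ⬝ᵥ g) := by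
        gcongr
    _ ≤ (g ⬝ᵥ g - Q *ᵥ g ⬝ᵥ Q *ᵥ g) * (g ⬝ᵥ g) := by
        nlinarith [mul_nonneg hE hN]

theorem sq_mulVec_apply_le (hQ : Q.IsLazyWalk α ε) (hα : 0 ≤ α) (hε : 0 ≤ ε)
    (hconn : Q.transitionGraph.Connected) {M : Matrix ι ι ℝ} (hM : M ∈ rowStochastic ℝ ι)
    {g : ι → ℝ} (hg : ∑ x, g x = 0) (z : ι) :
    4 * α ^ 2 * ε ^ 2 * ((M *ᵥ g) z) ^ 2 ≤ card ι * (g ⬝ᵥ g - Q *ᵥ g ⬝ᵥ Q *ᵥ g) := by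
  obtain ⟨w, y, hy, hw, hyz, hzw⟩ := exists_mulVec_apply_mem_Icc hM hg z
  calc 4 * α ^ 2 * ε ^ 2 * ((M *ᵥ g) z) ^ 2 ≤ 4 * α ^ 2 * ε ^ 2 * (g w - g y) ^ 2 := by
        have : ((M *ᵥ g) z) ^ 2 ≤ (g w - g y) ^ 2 := sq_le_sq' (by linarith) (by linarith)
        gcongr
    _ ≤ _ := hQ.sq_sub_le hα hε hconn g w y

theorem pow_four_mulVec_apply_le (hQ : Q.IsLazyWalk α ε) (hα : 0 ≤ α) (hε : 0 ≤ ε)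
    (hconn : Q.transitionGraph.Connected) {M : Matrix ι ι ℝ} (hM : M ∈ rowStochastic ℝ ι)
    {g : ι → ℝ} (hg : ∑ x, g x = 0) (z : ι) :
    2 * α ^ 2 * ε ^ 2 * ((M *ᵥ g) z) ^ 4 ≤ (g ⬝ᵥ g - Q *ᵥ g ⬝ᵥ Q *ᵥ g) * (g ⬝ᵥ g) := by
  obtain ⟨w, y, hy, hw, hyz, hzw⟩ := exists_mulVec_apply_mem_Icc hM hg z
  have hsq : ((M *ᵥ g) z) ^ 2 ≤ g w * |g w| - g y * |g y| := by
    rw [abs_of_nonneg hw, abs_of_nonpos hy]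
    rcases le_total 0 ((M *ᵥ g) z) with h | h <;> nlinarith
  calc 2 * α ^ 2 * ε ^ 2 * ((M *ᵥ g) z) ^ 4
      = 2 * α ^ 2 * ε ^ 2 * (((M *ᵥ g) z) ^ 2) ^ 2 := by ring
    _ ≤ 2 * α ^ 2 * ε ^ 2 * (g w * |g w| - g y * |g y|) ^ 2 := by gcongr
    _ ≤ _ := hQ.sq_mul_abs_sub_le hα hε hconn g w y

theorem sq_pow_mulVec_apply_le (hQ : Q.IsLazyWalk α ε) (hα : 0 < α) (hε : 0 < ε)
    (hconn : Q.transitionGraph.Connected) {g : ι → ℝ} (hg : ∑ x, g x = 0) (k : ℕ) (z : ι) :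
    ((Q ^ k *ᵥ g) z) ^ 2 ≤ card ι / (4 * α ^ 2 * ε ^ 2 * (k + 1)) * (g ⬝ᵥ g) := by
  have hstep : ∀ j ∈ range (k + 1), 4 * α ^ 2 * ε ^ 2 * ((Q ^ k *ᵥ g) z) ^ 2 ≤
      card ι * (Q ^ j *ᵥ g ⬝ᵥ Q ^ j *ᵥ g - Q *ᵥ (Q ^ j *ᵥ g) ⬝ᵥ Q *ᵥ (Q ^ j *ᵥ g)) := by
    intro j hj
    rw [← pow_sub_mulVec_pow_mulVec Q (Nat.lt_succ_iff.1 (mem_range.1 hj))]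
    exact hQ.sq_mulVec_apply_le hα.le hε.le hconn (hQ.pow_mem_rowStochastic _)
      ((hQ.sum_pow_mulVec j g).trans hg) z
  have hsum := card_nsmul_le_sum _ _ _ hstep
  rw [card_range, nsmul_eq_mul, ← mul_sum, sum_range_sub_dotProduct_pow_mulVec] at hsum
  rw [div_mul_eq_mul_div, le_div_iff₀ (by positivity)]
  push_cast at hsum
  nlinarith [dotProduct_self_nonneg (Q ^ (k + 1) *ᵥ g)]

theorem sq_pow_mulVec_apply_le_div_sqrt (hQ : Q.IsLazyWalk α ε) (hα : 0 < α) (hε : 0 < ε)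
    (hconn : Q.transitionGraph.Connected) {g : ι → ℝ} (hg : ∑ x, g x = 0) (k : ℕ) (z : ι) :
    ((Q ^ k *ᵥ g) z) ^ 2 ≤ 1 / (α * ε * √(2 * (k + 1))) * (g ⬝ᵥ g) := by
  have hstep : ∀ j ∈ range (k + 1), 2 * α ^ 2 * ε ^ 2 * ((Q ^ k *ᵥ g) z) ^ 4 ≤
      (Q ^ j *ᵥ g ⬝ᵥ Q ^ j *ᵥ g - Q *ᵥ (Q ^ j *ᵥ g) ⬝ᵥ Q *ᵥ (Q ^ j *ᵥ g)) * (g ⬝ᵥ g) := by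
    intro j hj
    rw [← pow_sub_mulVec_pow_mulVec Q (Nat.lt_succ_iff.1 (mem_range.1 hj))]
    refine (hQ.pow_four_mulVec_apply_le hα.le hε.le hconn (hQ.pow_mem_rowStochastic _)
      ((hQ.sum_pow_mulVec j g).trans hg) z).trans ?_
    gcongr
    · exact hQ.sub_dotProduct_mulVec_nonneg _
    · exact pow_mulVec_dotProduct_pow_mulVec_le hQ.mem_doublyStochastic hQ.isSymm g j
  have hsum := card_nsmul_le_sum _ _ _ hstep
  rw [card_range, nsmul_eq_mul, ← sum_mul, sum_range_sub_dotProduct_pow_mulVec] at hsum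
  have hN := dotProduct_self_nonneg g
  have hsq : (α * ε * √(2 * (k + 1)) * ((Q ^ k *ᵥ g) z) ^ 2) ^ 2 ≤ (g ⬝ᵥ g) ^ 2 := by
    rw [mul_pow, mul_pow, Real.sq_sqrt (by positivity)]
    push_cast at hsum
    nlinarith [dotProduct_self_nonneg (Q ^ (k + 1) *ᵥ g)]
  rw [one_div_mul_eq_div, le_div_iff₀ (by positivity), mul_comm]
  exact abs_le_of_sq_le_sq hsq hN |>.trans' (le_abs_self _)

theorem abs_card_mul_pow_apply_self_sub_one_le_div (hQ : Q.IsLazyWalk α ε) (hα : 0 < α)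
    (hε : 0 < ε) (hconn : Q.transitionGraph.Connected) (x : ι) (k : ℕ) :
    |card ι * (Q ^ k) x x - 1| ≤ card ι ^ 2 / (2 * α ^ 2 * ε ^ 2 * (k + 1)) := by
  obtain ⟨a, b, rfl, hab⟩ := exists_eq_add_and_sq_le_four_mul k
  have hsq := sq_card_mul_mul_apply_self_sub_one_le (hQ.pow_mem_rowStochastic a)
    (pow_mem hQ.mem_doublyStochastic b) (hQ.isSymm.pow b) x (by positivity) (by positivity)
    (fun _ hg => hQ.sq_pow_mulVec_apply_le hα hε hconn hg a x)
    (fun _ hg => hQ.sq_pow_mulVec_apply_le hα hε hconn hg b x)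
  rw [← pow_add] at hsq
  refine abs_le_of_sq_le_sq (hsq.trans ?_) (by positivity)
  push_cast at hab ⊢
  calc (card ι : ℝ) ^ 2 * (card ι / (4 * α ^ 2 * ε ^ 2 * (a + 1))) *
        (card ι / (4 * α ^ 2 * ε ^ 2 * (b + 1)))
      = (card ι : ℝ) ^ 4 / (4 * α ^ 4 * ε ^ 4 * (4 * (a + 1) * (b + 1))) := by
        field_simp
    _ ≤ (card ι : ℝ) ^ 4 / (4 * α ^ 4 * ε ^ 4 * ((a + b : ℝ) + 1) ^ 2) := by gcongr
    _ = (card ι ^ 2 / (2 * α ^ 2 * ε ^ 2 * ((a + b : ℝ) + 1))) ^ 2 := by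
        field_simp; ring

theorem abs_card_mul_pow_apply_self_sub_one_le_div_sqrt (hQ : Q.IsLazyWalk α ε) (hα : 0 < α)
    (hε : 0 < ε) (hconn : Q.transitionGraph.Connected) (x : ι) (k : ℕ) :
    |card ι * (Q ^ k) x x - 1| ≤ card ι / (α * ε * √(k + 1)) := by
  obtain ⟨a, b, rfl, hab⟩ := exists_eq_add_and_sq_le_four_mul k
  have hsq := sq_card_mul_mul_apply_self_sub_one_le (hQ.pow_mem_rowStochastic a)
    (pow_mem hQ.mem_doublyStochastic b) (hQ.isSymm.pow b) x (by positivity) (by positivity)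
    (fun _ hg => hQ.sq_pow_mulVec_apply_le_div_sqrt hα hε hconn hg a x)
    (fun _ hg => hQ.sq_pow_mulVec_apply_le_div_sqrt hα hε hconn hg b x)
  rw [← pow_add] at hsq
  refine abs_le_of_sq_le_sq (hsq.trans ?_) (by positivity)
  push_cast at hab ⊢
  have hk : (a + b : ℝ) + 1 ≤ √(2 * (a + 1)) * √(2 * (b + 1)) := by
    rw [← Real.sqrt_mul (by positivity), Real.le_sqrt (by positivity) (by positivity)]
    linarith
  calc (card ι : ℝ) ^ 2 * (1 / (α * ε * √(2 * (a + 1)))) * (1 / (α * ε * √(2 * (b + 1))))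
      = (card ι : ℝ) ^ 2 / (α ^ 2 * ε ^ 2 * (√(2 * (a + 1)) * √(2 * (b + 1)))) := by
        field_simp
    _ ≤ (card ι : ℝ) ^ 2 / (α ^ 2 * ε ^ 2 * ((a + b : ℝ) + 1)) := by gcongr
    _ = (card ι / (α * ε * √((a + b : ℝ) + 1))) ^ 2 := by
        rw [div_pow, mul_pow, mul_pow, Real.sq_sqrt (by positivity)]

end IsLazyWalk

end Matrix

theorem stmt_12_general (n : ℕ) (α c : ℝ) (hα : 0 < α) (hc : 0 < c)
    (Q : Matrix (Fin n) (Fin n) ℝ) (hsymm : Q.IsSymm)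
    (hnn : ∀ x y, 0 ≤ Q x y) (hrow : ∀ x, ∑ y, Q x y = 1)
    (hdiag : ∀ x, α ≤ Q x x)
    (hconn : (SimpleGraph.fromRel fun x y => 0 < Q x y).Connected)
    (hmin : ∀ x y, x ≠ y → 0 < Q x y → c ≤ Q x y / n) :
    ∀ (x : Fin n) (k : ℕ), 1 ≤ k →
      |(n : ℝ) * (Q ^ k) x x - 1|
        ≤ min (1 / (α * c * Real.sqrt ((k : ℝ) + 1)))
              (1 / (2 * α ^ 2 * c ^ 2 * ((k : ℝ) + 1))) := by
  intro x k _
  have hn : (0 : ℝ) < n := Nat.cast_pos.2 x.pos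
  have hQ : Q.IsLazyWalk α (c * n) :=
    { isSymm := hsymm
      mem_doublyStochastic := mem_doublyStochastic_iff_sum.2
        ⟨hnn, hrow, fun y => by simpa only [hsymm.apply] using hrow y⟩
      le_apply_self := hdiag
      le_apply_of_pos := fun x y hxy hpos => (le_div_iff₀ hn).1 (hmin x y hxy hpos) }
  have hε : 0 < c * n := by positivity
  have h₁ := hQ.abs_card_mul_pow_apply_self_sub_one_le_div_sqrt hα hε hconn x k
  have h₂ := hQ.abs_card_mul_pow_apply_self_sub_one_le_div hα hε hconn x k
  rw [Fintype.card_fin] at h₁ h₂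
  refine le_min (h₁.trans_eq ?_) (h₂.trans_eq ?_) <;> field_simp

/-- Lyons's return-probability estimate: for a lazy, symmetric, stochastic, connected
transition matrix `Q` with self-loop probability at least `α` and minimal off-diagonal
entry `π(x)Q(x,y) ≥ c` (with uniform stationary distribution `π(x) = 1/n`), for every
vertex `x` and every integer `k ≥ 1`,
`|Q^k(x,x)/π(x) − 1| ≤ min{1/(αc√(k+1)), 1/(2α²c²(k+1))}`. -/
theorem stmt_12 (n : ℕ) (hn : 1 ≤ n) (α c : ℝ) (hα : 0 < α) (hc : 0 < c)
    (Q : Matrix (Fin n) (Fin n) ℝ) (hsymm : Q.IsSymm)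
    (hnn : ∀ x y, 0 ≤ Q x y) (hrow : ∀ x, ∑ y, Q x y = 1)
    (hdiag : ∀ x, α ≤ Q x x)
    (hconn : (SimpleGraph.fromRel fun x y => 0 < Q x y).Connected)
    (hmin : ∀ x y, x ≠ y → 0 < Q x y → c ≤ Q x y / n) :
    ∀ (x : Fin n) (k : ℕ), 1 ≤ k →
      |(n : ℝ) * (Q ^ k) x x - 1|
        ≤ min (1 / (α * c * Real.sqrt ((k : ℝ) + 1)))
              (1 / (2 * α ^ 2 * c ^ 2 * ((k : ℝ) + 1))) :=
  stmt_12_general n α c hα hc Q hsymm hnn hrow hdiag hconn hmin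
end
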